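/- arXiv:2602.06457 — 8 statements merged into one kernel-verified Lean document; each statement's English description precedes it below -/
import Mathlib

section
/- Fix T ≥ 1 and constants 0 < μ_g ≤ L_{g,1}, L_{f,0}, L_{f,1}, L_{g,2}, L_F, Q > 0; set κ_g := L_{g,1}/μ_g and κ_F := 2L_{f,1}²/μ_g² + 4L_{f,0}²L_{g,2}²/μ_g⁴ + 16L_{f,1}²L_{g,1}²/μ_g⁴ + 16L_{f,0}²L_{g,1}²L_{g,2}²/μ_g⁶. Under the standing bilevel assumptions, suppose the adaptive inner-loop algorithm parameters satisfy: δ > 0, 0 < β ≤ 1/L_{g,1}, M ∈ ℕ with (1 − βμ_g)^M ≤ 1/T, and 0 < γ ≤ 1/(2L_F). Suppose the iterates x_t ∈ 𝒳 (t = 1,…,T+1), y_t ∈ E₂, v_t ∈ V satisfy, for every t ∈ {1,…,T}: (i) ‖∇_y g_t(x_t, y_{t+1})‖ ≤ δ; (ii) v_{t+1} = v_t^{M+1}, where v_t^1 = v_t (with v_1 ∈ V) and v_t^{m+1} = P_V(v_t^m − β(H_t(x_t, y_{t+1}) v_t^m − ∇_y f_t(x_t, y_{t+1}))) for m = 1,…,M;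 (iii) x_{t+1} = P_𝒳(x_t − γ ∇̃f_t(x_t, y_{t+1}, v_{t+1})). Then the bilevel local regret satisfies Σ_{t=1}^T ‖𝒢_𝒳(x_t, ∇F_t(x_t), γ)‖² ≤ 16Q/γ + 6 κ_F δ² T + 768 L_{f,0}² κ_g² + (8/γ) Σ_{t=2}^T sup_{x∈E₁} |F_t(x) − F_{t−1}(x)|. -/
/-!
Each round is an inexact projected gradient step on the `L_F`-smooth function `F_t`. The descent
lemma and the variational inequality of the projection give
`‖𝒢_𝒳(x_t, ∇F_t(x_t), γ)‖² ≤ 4 (F_t(x_t) - F_t(x_{t+1})) / γ + 6 ‖e_t‖²`, where `e_t` is the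
error of the approximate hypergradient. This error has two sources. By strong convexity the
inexact inner solution is `δ/μ_g`-close to `y*_t(x_t)`, and the approximate hypergradient built
from the exact solution `v*` of the linear system is Lipschitz in `y`; this contributes at most
`(7/8) κ_F δ²`. Each of the `M` projected gradient steps on the linear system contracts by
`1 - βμ_g`, because `‖I - βH‖ ≤ 1 - βμ_g`, which leaves an error of order `L_f0 κ_g / T`.
Summing over the rounds, the decrements `F_t(x_t) - F_t(x_{t+1})` telescope to at most `2Q` plus
the drifts `F_t(x_t) - F_{t-1}(x_t)`.
-/

open scoped RealInnerProductSpace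

section MetricProjection

variable {E : Type*} [NormedAddCommGroup E] {K : Set E} {p : E → E}

def IsMetricProjection (K : Set E) (p : E → E) : Prop :=
  ∀ z, p z ∈ K ∧ ∀ u ∈ K, ‖z - p z‖ ≤ ‖z - u‖

namespace IsMetricProjection

theorem apply_eq_self (hp : IsMetricProjection K p) {u : E} (hu : u ∈ K) : p u = u := by
  simpa [sub_eq_zero, eq_comm] using (hp u).2 u hu

variable [InnerProductSpace ℝ E]

theorem inner_sub_le_zero (hp : IsMetricProjection K p) (hK : Convex ℝ K) (z : E) {u : E}
    (hu : u ∈ K) : ⟪z - p z, u - p z⟫ ≤ 0 := by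
  have : Nonempty K := ⟨⟨p z, (hp z).1⟩⟩
  refine (norm_eq_iInf_iff_real_inner_le_zero hK (hp z).1).1 (le_antisymm ?_ ?_) u hu
  · exact le_ciInf fun w => (hp z).2 w w.2
  · exact ciInf_le (f := fun w : K => ‖z - (w : E)‖)
      ⟨0, Set.forall_mem_range.2 fun _ => norm_nonneg _⟩ ⟨p z, (hp z).1⟩

theorem norm_sub_le (hp : IsMetricProjection K p) (hK : Convex ℝ K) (z z' : E) :
    ‖p z - p z'‖ ≤ ‖z - z'‖ := by
  have h := hp.inner_sub_le_zero hK z (hp z').1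
  have h' := hp.inner_sub_le_zero hK z' (hp z).1
  have key : ‖p z - p z'‖ ^ 2 ≤ ⟪z - z', p z - p z'⟫ := by
    have e : z - z' = (p z - p z') + (z - p z) - (z' - p z') := by abel
    rw [← neg_sub (p z) (p z'), inner_neg_right] at h
    rw [e, inner_sub_left, inner_add_left, real_inner_self_eq_norm_sq]
    linarith
  nlinarith [real_inner_le_norm (z - z') (p z - p z'), norm_nonneg (p z - p z'),
    norm_nonneg (z - z')]

end IsMetricProjection

end MetricProjection

section FirstOrder

variable {E : Type*} [NormedAddCommGroup E] [InnerProductSpace ℝ E] [CompleteSpace E]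

theorem HasGradientAt.hasDerivAt_comp_lineMap {f : E → ℝ} {f' x y : E} {s : ℝ}
    (hf : HasGradientAt f f' (AffineMap.lineMap x y s)) :
    HasDerivAt (f ∘ AffineMap.lineMap x y) ⟪f', y - x⟫ s := by
  have h := hf.hasFDerivAt.comp_hasDerivAt s AffineMap.hasDerivAt_lineMap
  simp only [InnerProductSpace.toDual_apply_apply] at h
  exact h

theorem le_add_inner_add_sq_of_gradient_lipschitz {f : E → ℝ} {f' : E → E} {L : ℝ}
    (hf : ∀ z, HasGradientAt f (f' z) z) (hL : ∀ z w, ‖f' z - f' w‖ ≤ L * ‖z - w‖) (x y : E) :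
    f y ≤ f x + ⟪f' x, y - x⟫ + L / 2 * ‖y - x‖ ^ 2 := by
  let φ : ℝ → ℝ := fun s => f (AffineMap.lineMap x y s) - L / 2 * ‖y - x‖ ^ 2 * s ^ 2
  have hφ : ∀ s, HasDerivAt φ
      (⟪f' (AffineMap.lineMap x y s), y - x⟫ - L * ‖y - x‖ ^ 2 * s) s := fun s =>
    ((hf _).hasDerivAt_comp_lineMap.sub
      ((hasDerivAt_pow 2 s).const_mul (L / 2 * ‖y - x‖ ^ 2))).congr_deriv (by push_cast; ring)
  obtain ⟨c, ⟨hc0, -⟩, hc⟩ := exists_hasDerivAt_eq_slope φ _ zero_lt_one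
    (fun s _ => (hφ s).continuousAt.continuousWithinAt) (fun s _ => hφ s)
  have hgrad : ⟪f' (AffineMap.lineMap x y c) - f' x, y - x⟫ ≤ L * ‖y - x‖ ^ 2 * c := by
    calc _ ≤ ‖f' (AffineMap.lineMap x y c) - f' x‖ * ‖y - x‖ := real_inner_le_norm _ _
      _ ≤ L * ‖c • (y - x)‖ * ‖y - x‖ := by
          gcongr
          simpa [AffineMap.lineMap_apply_module'] using hL (AffineMap.lineMap x y c) x
      _ = L * ‖y - x‖ ^ 2 * c := by rw [norm_smul, Real.norm_of_nonneg hc0.le]; ring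
  simp only [φ, AffineMap.lineMap_apply_zero, AffineMap.lineMap_apply_one] at hc
  rw [inner_sub_left] at hgrad
  linarith

theorem StrongConvexOn.add_inner_add_sq_le {g : E → ℝ} {μ : ℝ}
    (hg : StrongConvexOn Set.univ μ g) {x g' : E} (hx : HasGradientAt g g' x) (z : E) :
    g x + ⟪g', z - x⟫ + μ / 2 * ‖z - x‖ ^ 2 ≤ g z := by
  have hconv := (strongConvexOn_iff_convex.1 hg).comp_affineMap (AffineMap.lineMap x z)
  have hx' : HasGradientAt g g' (AffineMap.lineMap x z (0 : ℝ)) := by simpa using hx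
  have := hconv.le_slope_of_hasDerivAt (Set.mem_univ 0) (Set.mem_univ 1) zero_lt_one
    (hx'.hasDerivAt_comp_lineMap.sub
      ((AffineMap.hasDerivAt_lineMap (a := x) (b := z) (x := 0)).norm_sq.const_mul (μ / 2)))
  simp only [slope_def_field, Function.comp_apply, AffineMap.lineMap_apply_zero,
    AffineMap.lineMap_apply_one, sub_zero, div_one] at this
  have hz : ‖z‖ ^ 2 = ‖x‖ ^ 2 + 2 * ⟪x, z - x⟫ + ‖z - x‖ ^ 2 := by
    rw [← norm_add_sq_real, add_sub_cancel]
  rw [hz] at this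
  linarith

theorem StrongConvexOn.mul_norm_sub_le_norm_gradient {g : E → ℝ} {μ : ℝ}
    (hg : StrongConvexOn Set.univ μ g) {x₀ y g₀ g' : E} (hmin : ∀ z, g x₀ ≤ g z)
    (hx₀ : HasGradientAt g g₀ x₀) (hy : HasGradientAt g g' y) : μ * ‖y - x₀‖ ≤ ‖g'‖ := by
  have hg₀ : g₀ = 0 := by
    simpa using IsLocalMin.hasFDerivAt_eq_zero (Filter.Eventually.of_forall hmin) hx₀.hasFDerivAt
  subst hg₀
  have h₁ := hg.add_inner_add_sq_le hy x₀
  have h₂ := hg.add_inner_add_sq_le hx₀ y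
  rw [inner_zero_left, ← neg_sub y x₀, inner_neg_right, norm_neg] at *
  have h₃ := real_inner_le_norm g' (y - x₀)
  rcases (norm_nonneg (y - x₀)).eq_or_lt with h | h
  · rw [← h, mul_zero]; exact norm_nonneg _
  · exact le_of_mul_le_mul_right (by nlinarith) h

end FirstOrder

section CoerciveOperator

variable {E : Type*} [NormedAddCommGroup E] [InnerProductSpace ℝ E] {μ : ℝ} {H : E →L[ℝ] E}

theorem mul_norm_le_norm_apply_of_coercive (hH : ∀ v, μ * ‖v‖ ^ 2 ≤ ⟪H v, v⟫) (v : E) :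
    μ * ‖v‖ ≤ ‖H v‖ := by
  rcases (norm_nonneg v).eq_or_lt with hv | hv
  · rw [← hv, mul_zero]; exact norm_nonneg _
  · refine le_of_mul_le_mul_right ?_ hv
    calc μ * ‖v‖ * ‖v‖ = μ * ‖v‖ ^ 2 := by ring
      _ ≤ ‖H v‖ * ‖v‖ := (hH v).trans (real_inner_le_norm _ _)

theorem norm_le_div_of_coercive (hH : ∀ v, μ * ‖v‖ ^ 2 ≤ ⟪H v, v⟫) (hμ : 0 < μ) {w b : E}
    {C : ℝ} (hw : H w = b) (hb : ‖b‖ ≤ C) : ‖w‖ ≤ C / μ := by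
  rw [le_div_iff₀ hμ, mul_comm]
  exact (mul_norm_le_norm_apply_of_coercive hH w).trans (hw ▸ hb)

theorem mul_norm_sub_le_of_coercive (hH : ∀ v, μ * ‖v‖ ^ 2 ≤ ⟪H v, v⟫) {H' : E →L[ℝ] E}
    {w w' b b' : E} (hw : H w = b) (hw' : H' w' = b') :
    μ * ‖w - w'‖ ≤ ‖b - b'‖ + ‖H - H'‖ * ‖w'‖ :=
  calc μ * ‖w - w'‖ ≤ ‖H (w - w')‖ := mul_norm_le_norm_apply_of_coercive hH _
    _ = ‖(b - b') - (H - H') w'‖ := by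
        rw [map_sub, hw, sub_apply, hw']; abel_nf
    _ ≤ ‖b - b'‖ + ‖H - H'‖ * ‖w'‖ :=
        (norm_sub_le _ _).trans (by gcongr; exact (H - H').le_opNorm _)

theorem norm_sub_smul_apply_le_of_coercive (hsa : ∀ v u, ⟪H v, u⟫ = ⟪v, H u⟫)
    (hH : ∀ v, μ * ‖v‖ ^ 2 ≤ ⟪H v, v⟫) {L β : ℝ} (hHL : ‖H‖ ≤ L) (hμL : μ ≤ L) (hβ : 0 ≤ β)
    (hβL : β * L ≤ 1) (v : E) : ‖v - β • H v‖ ≤ (1 - β * μ) * ‖v‖ := by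
  set S : E →L[ℝ] E := ContinuousLinearMap.id ℝ E - β • H
  have hS : ∀ u, S u = u - β • H u := fun u => rfl
  have hsymm : (S : E →ₗ[ℝ] E).IsSymmetric := fun u w => by
    simp only [ContinuousLinearMap.coe_coe, hS, inner_sub_left, inner_sub_right,
      real_inner_smul_left, real_inner_smul_right, hsa]
  -- `μ ≤ ⟪H u, u⟫ / ‖u‖² ≤ L` puts every Rayleigh quotient of `S` in `[0, 1 - βμ]`.
  have hquad : ∀ u, |⟪S u, u⟫| ≤ (1 - β * μ) * ‖u‖ ^ 2 := fun u => by
    have hup : ⟪H u, u⟫ ≤ L * ‖u‖ ^ 2 := (real_inner_le_norm _ _).trans (by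
      nlinarith [H.le_opNorm u, norm_nonneg u, norm_nonneg (H u), (norm_nonneg H).trans hHL])
    rw [hS, inner_sub_left, real_inner_smul_left, real_inner_self_eq_norm_sq, abs_le]
    constructor <;> nlinarith [hH u, sq_nonneg ‖u‖]
  have hnorm : ‖S‖ ≤ 1 - β * μ := by
    rw [S.norm_eq_iSup_rayleighQuotient hsymm]
    refine ciSup_le fun u => ?_
    rcases eq_or_ne u 0 with rfl | hu
    · simpa using (mul_le_mul_of_nonneg_left hμL hβ).trans hβL
    rw [ContinuousLinearMap.rayleighQuotient, ContinuousLinearMap.reApplyInnerSelf_apply,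
      RCLike.re_to_real, abs_div, abs_sq,
      div_le_iff₀ (pow_pos (norm_pos_iff.2 hu) 2)]
    exact hquad u
  simpa [hS] using S.le_of_opNorm_le hnorm v

theorem norm_iterate_projStep_sub_le {K : Set E} {p : E → E} (hp : IsMetricProjection K p)
    (hK : Convex ℝ K) (hsa : ∀ v u, ⟪H v, u⟫ = ⟪v, H u⟫) (hH : ∀ v, μ * ‖v‖ ^ 2 ≤ ⟪H v, v⟫)
    {L β : ℝ} (hHL : ‖H‖ ≤ L) (hμL : μ ≤ L) (hβ : 0 ≤ β) (hβL : β * L ≤ 1) {b w : E}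
    (hw : H w = b) (hwK : w ∈ K) (M : ℕ) (u : E) :
    ‖(fun u => p (u - β • (H u - b)))^[M] u - w‖ ≤ (1 - β * μ) ^ M * ‖u - w‖ := by
  set Φ := fun u => p (u - β • (H u - b))
  have hfix : Φ w = w := by simp [Φ, hw, hp.apply_eq_self hwK]
  have hρ : 0 ≤ 1 - β * μ := by nlinarith
  induction M with
  | zero => simp
  | succ m ih =>
    calc ‖Φ^[m + 1] u - w‖ = ‖Φ (Φ^[m] u) - Φ w‖ := by rw [Function.iterate_succ_apply', hfix]
      _ ≤ ‖(Φ^[m] u - w) - β • H (Φ^[m] u - w)‖ :=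
          (hp.norm_sub_le hK _ _).trans_eq (by rw [map_sub]; congr 1; module)
      _ ≤ (1 - β * μ) * ‖Φ^[m] u - w‖ :=
          norm_sub_smul_apply_le_of_coercive hsa hH hHL hμL hβ hβL _
      _ ≤ (1 - β * μ) ^ (m + 1) * ‖u - w‖ := by rw [pow_succ', mul_assoc]; gcongr

end CoerciveOperator

section ProjectedGradient

variable {E : Type*} [NormedAddCommGroup E] [InnerProductSpace ℝ E] [CompleteSpace E]
  {K : Set E} {p : E → E} {F : E → ℝ} {F' : E → E} {L γ : ℝ}

noncomputable def gradientMapping (p : E → E) (x g : E) (γ : ℝ) : E := γ⁻¹ • (x - p (x - γ • g))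

theorem sq_norm_sub_projStep_le (hp : IsMetricProjection K p) (hK : Convex ℝ K)
    (hF : ∀ z, HasGradientAt F (F' z) z) (hL : ∀ z w, ‖F' z - F' w‖ ≤ L * ‖z - w‖)
    (hγ : 0 < γ) (hγL : γ * L ≤ 1 / 2) {x : E} (hx : x ∈ K) (h : E) :
    ‖x - p (x - γ • h)‖ ^ 2 ≤
      2 * γ * (F x - F (p (x - γ • h))) + 2 * γ ^ 2 * ‖F' x - h‖ ^ 2 := by
  set x' := p (x - γ • h)
  have hvi : ‖x - x'‖ ^ 2 ≤ γ * ⟪h, x - x'⟫ := by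
    have := hp.inner_sub_le_zero hK (x - γ • h) hx
    rw [show x - γ • h - x' = (x - x') - γ • h by abel, inner_sub_left, real_inner_smul_left,
      real_inner_self_eq_norm_sq] at this
    linarith
  have hdesc := le_add_inner_add_sq_of_gradient_lipschitz hF hL x x'
  rw [← neg_sub x x', inner_neg_right, norm_neg,
    show F' x = h + (F' x - h) by abel, inner_add_left] at hdesc
  have herr := (abs_le.1 (abs_real_inner_le_norm (F' x - h) (x - x'))).1
  nlinarith [mul_le_mul_of_nonneg_left hdesc hγ.le, mul_le_mul_of_nonneg_left herr hγ.le,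
    mul_le_mul_of_nonneg_right hγL (sq_nonneg ‖x - x'‖),
    sq_nonneg (‖x - x'‖ - 2 * γ * ‖F' x - h‖)]

theorem sq_norm_gradientMapping_le (hp : IsMetricProjection K p) (hK : Convex ℝ K)
    (hF : ∀ z, HasGradientAt F (F' z) z) (hL : ∀ z w, ‖F' z - F' w‖ ≤ L * ‖z - w‖)
    (hγ : 0 < γ) (hγL : γ * L ≤ 1 / 2) {x : E} (hx : x ∈ K) (h : E) :
    ‖gradientMapping p x (F' x) γ‖ ^ 2 ≤
      4 / γ * (F x - F (p (x - γ • h))) + 6 * ‖F' x - h‖ ^ 2 := by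
  set x' := p (x - γ • h)
  have hstep := sq_norm_sub_projStep_le hp hK hF hL hγ hγL hx h
  have hcmp : γ * ‖gradientMapping p x (F' x) γ‖ ≤ ‖x - x'‖ + γ * ‖F' x - h‖ :=
    calc γ * ‖gradientMapping p x (F' x) γ‖ = ‖(x - x') + (x' - p (x - γ • F' x))‖ := by
          rw [gradientMapping, norm_smul, Real.norm_of_nonneg (inv_nonneg.2 hγ.le), ← mul_assoc,
            mul_inv_cancel₀ hγ.ne', one_mul, sub_add_sub_cancel]
      _ ≤ ‖x - x'‖ + ‖(x - γ • h) - (x - γ • F' x)‖ :=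
          norm_add_le_of_le le_rfl (hp.norm_sub_le hK _ _)
      _ = ‖x - x'‖ + γ * ‖F' x - h‖ := by
          rw [sub_sub_sub_cancel_left, ← smul_sub, norm_smul, Real.norm_of_nonneg hγ.le]
  have hscaled : γ ^ 2 * ‖gradientMapping p x (F' x) γ‖ ^ 2 ≤
      γ ^ 2 * (4 / γ * (F x - F x') + 6 * ‖F' x - h‖ ^ 2) := by
    have hsq := pow_le_pow_left₀ (by positivity) hcmp 2
    rw [show γ ^ 2 * (4 / γ * (F x - F x') + 6 * ‖F' x - h‖ ^ 2) =
      4 * γ * (F x - F x') + 6 * γ ^ 2 * ‖F' x - h‖ ^ 2 by field_simp]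
    nlinarith [sq_nonneg (‖x - x'‖ - γ * ‖F' x - h‖)]
  exact le_of_mul_le_mul_left hscaled (by positivity)

end ProjectedGradient

theorem norm_sub_le_of_sq_norm_sub_le {E₁ E₂ F : Type*} [SeminormedAddCommGroup E₁]
    [SeminormedAddCommGroup E₂] [SeminormedAddCommGroup F] {φ : E₁ → E₂ → F}
    {L : ℝ} (hL : 0 ≤ L)
    (h : ∀ x x' y y', ‖φ x y - φ x' y'‖ ^ 2 ≤ L ^ 2 * (‖x - x'‖ ^ 2 + ‖y - y'‖ ^ 2))
    (x : E₁) (y y' : E₂) : ‖φ x y - φ x y'‖ ≤ L * ‖y - y'‖ :=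
  (sq_le_sq₀ (norm_nonneg _) (by positivity)).1 (by simpa [mul_pow] using h x x y y')

-- Cauchy–Schwarz with weights 2, 4, 16, 16, whose reciprocals sum to 7/8.
theorem sq_lipschitzConst_div_le_kappaF {μ L_g1 L_f0 L_f1 L_g2 : ℝ} (hμ : 0 < μ) :
    ((L_f1 + L_g2 * (L_f0 / μ) + L_g1 * (L_f1 + L_g2 * (L_f0 / μ)) / μ) / μ) ^ 2 ≤
      7 / 8 * (2 * L_f1 ^ 2 / μ ^ 2 + 4 * L_f0 ^ 2 * L_g2 ^ 2 / μ ^ 4 +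
        16 * L_f1 ^ 2 * L_g1 ^ 2 / μ ^ 4 + 16 * L_f0 ^ 2 * L_g1 ^ 2 * L_g2 ^ 2 / μ ^ 6) := by
  set u₁ := L_f1 / μ
  set u₂ := L_f0 * L_g2 / μ ^ 2
  set u₃ := L_f1 * L_g1 / μ ^ 2
  set u₄ := L_f0 * L_g1 * L_g2 / μ ^ 3
  have hu : (L_f1 + L_g2 * (L_f0 / μ) + L_g1 * (L_f1 + L_g2 * (L_f0 / μ)) / μ) / μ =
      u₁ + u₂ + u₃ + u₄ := by
    simp only [u₁, u₂, u₃, u₄]; field_simp; ring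
  have hκ : 2 * L_f1 ^ 2 / μ ^ 2 + 4 * L_f0 ^ 2 * L_g2 ^ 2 / μ ^ 4 +
      16 * L_f1 ^ 2 * L_g1 ^ 2 / μ ^ 4 + 16 * L_f0 ^ 2 * L_g1 ^ 2 * L_g2 ^ 2 / μ ^ 6 =
      2 * u₁ ^ 2 + 4 * u₂ ^ 2 + 16 * u₃ ^ 2 + 16 * u₄ ^ 2 := by
    simp only [u₁, u₂, u₃, u₄]; field_simp
  rw [hu, hκ]
  nlinarith [sq_nonneg (2 * u₁ - 4 * u₂), sq_nonneg (2 * u₁ - 16 * u₃),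
    sq_nonneg (2 * u₁ - 16 * u₄), sq_nonneg (4 * u₂ - 16 * u₃), sq_nonneg (4 * u₂ - 16 * u₄),
    sq_nonneg (u₃ - u₄)]

section Hypergradient

variable {E₁ E₂ : Type*} [NormedAddCommGroup E₁] [InnerProductSpace ℝ E₁]
  [NormedAddCommGroup E₂] [InnerProductSpace ℝ E₂]

def approxHypergrad (fx : E₁ → E₂ → E₁) (J : E₁ → E₂ → E₂ →L[ℝ] E₁) (x : E₁) (y v : E₂) : E₁ :=
  fx x y - J x y v

theorem norm_approxHypergrad_sub_le {μ L_g1 L_f0 L_f1 L_g2 : ℝ} (hμ : 0 < μ)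
    {fx : E₁ → E₂ → E₁} {fy : E₁ → E₂ → E₂} {H : E₁ → E₂ → E₂ →L[ℝ] E₂}
    {J : E₁ → E₂ → E₂ →L[ℝ] E₁} {vstar : E₁ → E₂ → E₂} {x : E₁}
    (hfy : ∀ y, ‖fy x y‖ ≤ L_f0)
    (hfx_lip : ∀ y y', ‖fx x y - fx x y'‖ ≤ L_f1 * ‖y - y'‖)
    (hfy_lip : ∀ y y', ‖fy x y - fy x y'‖ ≤ L_f1 * ‖y - y'‖)
    (hH : ∀ y v, μ * ‖v‖ ^ 2 ≤ ⟪H x y v, v⟫) (hJ : ∀ y, ‖J x y‖ ≤ L_g1)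
    (hH_lip : ∀ y y', ‖H x y - H x y'‖ ≤ L_g2 * ‖y - y'‖)
    (hJ_lip : ∀ y y', ‖J x y - J x y'‖ ≤ L_g2 * ‖y - y'‖)
    (hvstar : ∀ y, H x y (vstar x y) = fy x y) (y y' : E₂) :
    ‖approxHypergrad fx J x y (vstar x y) - approxHypergrad fx J x y' (vstar x y')‖ ≤
      (L_f1 + L_g2 * (L_f0 / μ) + L_g1 * (L_f1 + L_g2 * (L_f0 / μ)) / μ) * ‖y - y'‖ := by
  have hv : ∀ y, ‖vstar x y‖ ≤ L_f0 / μ := fun y =>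
    norm_le_div_of_coercive (hH y) hμ (hvstar y) (hfy y)
  have hdv : ‖vstar x y - vstar x y'‖ ≤ (L_f1 + L_g2 * (L_f0 / μ)) * ‖y - y'‖ / μ := by
    rw [le_div_iff₀ hμ, mul_comm]
    calc μ * ‖vstar x y - vstar x y'‖
        ≤ ‖fy x y - fy x y'‖ + ‖H x y - H x y'‖ * ‖vstar x y'‖ :=
          mul_norm_sub_le_of_coercive (hH y) (hvstar y) (hvstar y')
      _ ≤ L_f1 * ‖y - y'‖ + L_g2 * ‖y - y'‖ * (L_f0 / μ) :=
          add_le_add (hfy_lip y y') (mul_le_mul (hH_lip y y') (hv y') (norm_nonneg _)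
            ((norm_nonneg _).trans (hH_lip y y')))
      _ = (L_f1 + L_g2 * (L_f0 / μ)) * ‖y - y'‖ := by ring
  calc ‖approxHypergrad fx J x y (vstar x y) - approxHypergrad fx J x y' (vstar x y')‖
      = ‖(fx x y - fx x y') -
          ((J x y - J x y') (vstar x y) + J x y' (vstar x y - vstar x y'))‖ := by
        simp only [approxHypergrad, sub_apply, map_sub]; abel_nf
    _ ≤ ‖fx x y - fx x y'‖ + (‖J x y - J x y'‖ * ‖vstar x y‖ +
          ‖J x y'‖ * ‖vstar x y - vstar x y'‖) :=
        norm_sub_le_of_le le_rfl (norm_add_le_of_le ((J x y - J x y').le_opNorm _)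
          ((J x y').le_opNorm _))
    _ ≤ L_f1 * ‖y - y'‖ + (L_g2 * ‖y - y'‖ * (L_f0 / μ) +
          L_g1 * ((L_f1 + L_g2 * (L_f0 / μ)) * ‖y - y'‖ / μ)) :=
        add_le_add (hfx_lip y y') (add_le_add
          (mul_le_mul (hJ_lip y y') (hv y) (norm_nonneg _) ((norm_nonneg _).trans (hJ_lip y y')))
          (mul_le_mul (hJ y') hdv (norm_nonneg _) ((norm_nonneg _).trans (hJ y'))))
    _ = (L_f1 + L_g2 * (L_f0 / μ) + L_g1 * (L_f1 + L_g2 * (L_f0 / μ)) / μ) * ‖y - y'‖ := by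
        ring

theorem sq_norm_hypergrad_sub_approxHypergrad_le [CompleteSpace E₂]
    {μ L_g1 L_f0 L_f1 L_g2 β δ : ℝ} (hμ : 0 < μ) (hμL : μ ≤ L_g1) (hLf0 : 0 ≤ L_f0)
    (hLf1 : 0 ≤ L_f1) (hLg2 : 0 ≤ L_g2) (hβ : 0 ≤ β) (hβ' : β ≤ 1 / L_g1)
    {fx : E₁ → E₂ → E₁} {fy : E₁ → E₂ → E₂}
    (hfbd : ∀ x y, ‖fx x y‖ ^ 2 + ‖fy x y‖ ^ 2 ≤ L_f0 ^ 2)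
    (hflip : ∀ x x' y y', ‖fx x y - fx x' y'‖ ^ 2 + ‖fy x y - fy x' y'‖ ^ 2 ≤
      L_f1 ^ 2 * (‖x - x'‖ ^ 2 + ‖y - y'‖ ^ 2))
    {g : E₁ → E₂ → ℝ} {gy : E₁ → E₂ → E₂} {ystar : E₁ → E₂}
    (hgy : ∀ x y, HasGradientAt (g x) (gy x y) y) (hgsc : ∀ x, StrongConvexOn Set.univ μ (g x))
    (hymin : ∀ x y, g x (ystar x) ≤ g x y)
    {H : E₁ → E₂ → E₂ →L[ℝ] E₂} {J : E₁ → E₂ → E₂ →L[ℝ] E₁}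
    (hHsa : ∀ x y v u, ⟪H x y v, u⟫ = ⟪v, H x y u⟫)
    (hHcoer : ∀ x y v, μ * ‖v‖ ^ 2 ≤ ⟪H x y v, v⟫)
    (hHbd : ∀ x y, ‖H x y‖ ≤ L_g1) (hJbd : ∀ x y, ‖J x y‖ ≤ L_g1)
    (hHlip : ∀ x x' y y', ‖H x y - H x' y'‖ ^ 2 ≤ L_g2 ^ 2 * (‖x - x'‖ ^ 2 + ‖y - y'‖ ^ 2))
    (hJlip : ∀ x x' y y', ‖J x y - J x' y'‖ ^ 2 ≤ L_g2 ^ 2 * (‖x - x'‖ ^ 2 + ‖y - y'‖ ^ 2))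
    {vstar : E₁ → E₂ → E₂} (hvstar : ∀ x y, H x y (vstar x y) = fy x y)
    {projV : E₂ → E₂} (hprojV : IsMetricProjection (Metric.closedBall 0 (L_f0 / μ)) projV)
    (x : E₁) {y v : E₂} (hv : ‖v‖ ≤ L_f0 / μ) (hy : ‖gy x y‖ ≤ δ) (M : ℕ) :
    ‖approxHypergrad fx J x (ystar x) (vstar x (ystar x)) -
        approxHypergrad fx J x y ((fun u => projV (u - β • (H x y u - fy x y)))^[M] v)‖ ^ 2 ≤
      (2 * L_f1 ^ 2 / μ ^ 2 + 4 * L_f0 ^ 2 * L_g2 ^ 2 / μ ^ 4 +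
        16 * L_f1 ^ 2 * L_g1 ^ 2 / μ ^ 4 + 16 * L_f0 ^ 2 * L_g1 ^ 2 * L_g2 ^ 2 / μ ^ 6) * δ ^ 2 +
      8 * (2 * L_f0 * (L_g1 / μ) * (1 - β * μ) ^ M) ^ 2 := by
  set v' := (fun u => projV (u - β • (H x y u - fy x y)))^[M] v
  have hfy : ∀ y, ‖fy x y‖ ≤ L_f0 := fun y =>
    (sq_le_sq₀ (norm_nonneg _) hLf0).1 ((le_add_of_nonneg_left (sq_nonneg _)).trans (hfbd x y))
  have hA := norm_approxHypergrad_sub_le hμ hfy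
    (norm_sub_le_of_sq_norm_sub_le hLf1
      (fun x x' y y' => (le_add_of_nonneg_right (sq_nonneg _)).trans (hflip x x' y y')) x)
    (norm_sub_le_of_sq_norm_sub_le hLf1
      (fun x x' y y' => (le_add_of_nonneg_left (sq_nonneg _)).trans (hflip x x' y y')) x)
    (hHcoer x) (hJbd x) (norm_sub_le_of_sq_norm_sub_le hLg2 hHlip x)
    (norm_sub_le_of_sq_norm_sub_le hLg2 hJlip x) (hvstar x) (ystar x) y
  have hdist : ‖ystar x - y‖ ≤ δ / μ := by
    rw [norm_sub_rev, le_div_iff₀ hμ, mul_comm]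
    exact ((hgsc x).mul_norm_sub_le_norm_gradient (hymin x) (hgy x _) (hgy x y)).trans hy
  have hvstar_bd : ‖vstar x y‖ ≤ L_f0 / μ :=
    norm_le_div_of_coercive (hHcoer x y) hμ (hvstar x y) (hfy y)
  have hβL : β * L_g1 ≤ 1 := (le_div_iff₀ (hμ.trans_le hμL)).1 hβ'
  have hρ : 0 ≤ (1 - β * μ) ^ M := pow_nonneg (by nlinarith) M
  have hcontract := norm_iterate_projStep_sub_le hprojV (convex_closedBall 0 _) (hHsa x y)
    (hHcoer x y) (hHbd x y) hμL hβ hβL (hvstar x y) (mem_closedBall_zero_iff.2 hvstar_bd) M v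
  have hB : ‖J x y (v' - vstar x y)‖ ≤ 2 * L_f0 * (L_g1 / μ) * (1 - β * μ) ^ M :=
    calc ‖J x y (v' - vstar x y)‖ ≤ L_g1 * ((1 - β * μ) ^ M * (L_f0 / μ + L_f0 / μ)) := by
          refine ((J x y).le_opNorm _).trans (mul_le_mul (hJbd x y) ?_ (norm_nonneg _)
            (hμ.le.trans hμL))
          exact hcontract.trans (mul_le_mul_of_nonneg_left (norm_sub_le_of_le hv hvstar_bd) hρ)
      _ = 2 * L_f0 * (L_g1 / μ) * (1 - β * μ) ^ M := by ring
  have hA_sq : ‖approxHypergrad fx J x (ystar x) (vstar x (ystar x)) -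
      approxHypergrad fx J x y (vstar x y)‖ ^ 2 ≤
      7 / 8 * (2 * L_f1 ^ 2 / μ ^ 2 + 4 * L_f0 ^ 2 * L_g2 ^ 2 / μ ^ 4 +
        16 * L_f1 ^ 2 * L_g1 ^ 2 / μ ^ 4 + 16 * L_f0 ^ 2 * L_g1 ^ 2 * L_g2 ^ 2 / μ ^ 6) *
        δ ^ 2 := by
    set K := L_f1 + L_g2 * (L_f0 / μ) + L_g1 * (L_f1 + L_g2 * (L_f0 / μ)) / μ
    calc _ ≤ K ^ 2 * ‖ystar x - y‖ ^ 2 := by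
          rw [← mul_pow]; exact pow_le_pow_left₀ (norm_nonneg _) hA 2
      _ ≤ K ^ 2 * (δ / μ) ^ 2 := by gcongr
      _ = (K / μ) ^ 2 * δ ^ 2 := by ring
      _ ≤ _ := by gcongr; exact sq_lipschitzConst_div_le_kappaF hμ
  have hsplit : approxHypergrad fx J x (ystar x) (vstar x (ystar x)) - approxHypergrad fx J x y v' =
      (approxHypergrad fx J x (ystar x) (vstar x (ystar x)) -
        approxHypergrad fx J x y (vstar x y)) + J x y (v' - vstar x y) := by
    simp only [approxHypergrad, map_sub]; abel
  rw [hsplit]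
  nlinarith [pow_le_pow_left₀ (norm_nonneg _) (norm_add_le (approxHypergrad fx J x (ystar x)
      (vstar x (ystar x)) - approxHypergrad fx J x y (vstar x y)) (J x y (v' - vstar x y))) 2,
    pow_le_pow_left₀ (norm_nonneg _) hB 2,
    sq_nonneg (‖approxHypergrad fx J x (ystar x) (vstar x (ystar x)) -
      approxHypergrad fx J x y (vstar x y)‖ - 7 * ‖J x y (v' - vstar x y)‖)]

end Hypergradient

section OnlineRegret

open Finset

variable {α : Type*} (F : ℕ → α → ℝ) (x : ℕ → α)

theorem sum_Icc_sub_apply_succ_eq {T : ℕ} (hT : 1 ≤ T) :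
    ∑ t ∈ Icc 1 T, (F t (x t) - F t (x (t + 1))) =
      F 1 (x 1) - F T (x (T + 1)) + ∑ t ∈ Icc 2 T, (F t (x t) - F (t - 1) (x t)) := by
  induction T, hT using Nat.le_induction with
  | base => simp
  | succ T hT ih =>
    rw [sum_Icc_succ_top (by omega), sum_Icc_succ_top (by omega), ih, Nat.add_sub_cancel]
    ring

theorem sum_le_of_le_mul_sub_add {a : ℕ → ℝ} {c D Q : ℝ} {T : ℕ} (hT : 1 ≤ T) (hc : 0 ≤ c)
    (hF : ∀ t ∈ Icc 1 T, ∀ z, |F t z| ≤ Q)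
    (ha : ∀ t ∈ Icc 1 T, a t ≤ c * (F t (x t) - F t (x (t + 1))) + D) :
    ∑ t ∈ Icc 1 T, a t ≤
      c * (2 * Q) + T * D + c * ∑ t ∈ Icc 2 T, ⨆ z, |F t z - F (t - 1) z| := by
  have hdrift : ∀ t ∈ Icc 2 T, F t (x t) - F (t - 1) (x t) ≤ ⨆ z, |F t z - F (t - 1) z| := by
    intro t ht
    obtain ⟨ht2, htT⟩ := mem_Icc.1 ht
    have hbdd : BddAbove (Set.range fun z => |F t z - F (t - 1) z|) :=
      ⟨2 * Q, Set.forall_mem_range.2 fun z => (abs_sub _ _).trans (by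
        linarith [hF t (mem_Icc.2 ⟨by omega, htT⟩) z,
          hF (t - 1) (mem_Icc.2 ⟨by omega, by omega⟩) z])⟩
    exact (le_abs_self _).trans (le_ciSup hbdd (x t))
  have hends : F 1 (x 1) - F T (x (T + 1)) ≤ 2 * Q := by
    linarith [le_abs_self (F 1 (x 1)), neg_abs_le (F T (x (T + 1))),
      hF 1 (mem_Icc.2 ⟨le_rfl, hT⟩) (x 1), hF T (mem_Icc.2 ⟨hT, le_rfl⟩) (x (T + 1))]
  calc ∑ t ∈ Icc 1 T, a t ≤ ∑ t ∈ Icc 1 T, (c * (F t (x t) - F t (x (t + 1))) + D) :=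
        sum_le_sum ha
    _ = c * (F 1 (x 1) - F T (x (T + 1)) + ∑ t ∈ Icc 2 T, (F t (x t) - F (t - 1) (x t))) +
          T * D := by
        rw [sum_add_distrib, ← mul_sum, sum_Icc_sub_apply_succ_eq F x hT, sum_const,
          Nat.card_Icc, nsmul_eq_mul, Nat.add_sub_cancel]
    _ ≤ c * (2 * Q) + T * D + c * ∑ t ∈ Icc 2 T, ⨆ z, |F t z - F (t - 1) z| := by
        nlinarith [mul_le_mul_of_nonneg_left (add_le_add hends (sum_le_sum hdrift)) hc]

theorem forall_mem_of_eq_iterate {s : Set α} {Φ : ℕ → α → α} (hΦ : ∀ t, Set.MapsTo (Φ t) s s)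
    {v : ℕ → α} {T M : ℕ} (hv₁ : v 1 ∈ s)
    (hv : ∀ t ∈ Icc 1 T, v (t + 1) = (Φ t)^[M] (v t)) : ∀ t ∈ Icc 1 T, v t ∈ s := by
  intro t ht
  induction t, (mem_Icc.1 ht).1 using Nat.le_induction with
  | base => exact hv₁
  | succ t ht₁ ih =>
    have ht' : t ∈ Icc 1 T := mem_Icc.2 ⟨ht₁, by grind⟩
    exact hv t ht' ▸ (hΦ t).iterate M (ih ht')

end OnlineRegret

theorem aobo_regret_bound_general {E₁ E₂ : Type*}
    [NormedAddCommGroup E₁] [InnerProductSpace ℝ E₁] [FiniteDimensional ℝ E₁]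
    [NormedAddCommGroup E₂] [InnerProductSpace ℝ E₂] [FiniteDimensional ℝ E₂]
    -- constants
    (μ_g L_g1 L_f0 L_f1 L_g2 L_F Q : ℝ)
    (hμ : 0 < μ_g) (hμL : μ_g ≤ L_g1) (hLf0 : 0 < L_f0) (hLf1 : 0 < L_f1)
    (hLg2 : 0 < L_g2) (hLF : 0 < L_F) (hQ : 0 < Q)
    (κ_g κ_F : ℝ) (hκg : κ_g = L_g1 / μ_g)
    (hκF : κ_F = 2 * L_f1 ^ 2 / μ_g ^ 2 + 4 * L_f0 ^ 2 * L_g2 ^ 2 / μ_g ^ 4 +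
      16 * L_f1 ^ 2 * L_g1 ^ 2 / μ_g ^ 4 + 16 * L_f0 ^ 2 * L_g1 ^ 2 * L_g2 ^ 2 / μ_g ^ 6)
    (T : ℕ) (hT : 1 ≤ T)
    -- the feasible set and its metric projection
    (X : Set E₁) (hXconv : Convex ℝ X)
    (projX : E₁ → E₁)
    (hprojX : ∀ z : E₁, projX z ∈ X ∧ ∀ u ∈ X, ‖z - projX z‖ ≤ ‖z - u‖)
    -- the metric projection onto the ball V = {‖v‖ ≤ L_f0/μ_g}
    (projV : E₂ → E₂)
    (hprojV : ∀ z : E₂, ‖projV z‖ ≤ L_f0 / μ_g ∧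
      ∀ u : E₂, ‖u‖ ≤ L_f0 / μ_g → ‖z - projV z‖ ≤ ‖z - u‖)
    -- upper-level objectives and their partial gradients
    (fx : ℕ → E₁ → E₂ → E₁) (fy : ℕ → E₁ → E₂ → E₂)
    (hfbd : ∀ t ∈ Finset.Icc 1 T, ∀ (x : E₁) (y : E₂),
      ‖fx t x y‖ ^ 2 + ‖fy t x y‖ ^ 2 ≤ L_f0 ^ 2)
    (hflip : ∀ t ∈ Finset.Icc 1 T, ∀ (x x' : E₁) (y y' : E₂),
      ‖fx t x y - fx t x' y'‖ ^ 2 + ‖fy t x y - fy t x' y'‖ ^ 2 ≤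
        L_f1 ^ 2 * (‖x - x'‖ ^ 2 + ‖y - y'‖ ^ 2))
    -- inner-level objectives: strongly convex with unique minimizer ystar
    (g : ℕ → E₁ → E₂ → ℝ) (gy : ℕ → E₁ → E₂ → E₂) (ystar : ℕ → E₁ → E₂)
    (hgy : ∀ t ∈ Finset.Icc 1 T, ∀ (x : E₁) (y : E₂), HasGradientAt (g t x) (gy t x y) y)
    (hgsc : ∀ t ∈ Finset.Icc 1 T, ∀ x : E₁, StrongConvexOn Set.univ μ_g (g t x))
    (hymin : ∀ t ∈ Finset.Icc 1 T, ∀ (x : E₁) (y : E₂), g t x (ystar t x) ≤ g t x y)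
    -- Hessian data
    (H : ℕ → E₁ → E₂ → (E₂ →L[ℝ] E₂)) (J : ℕ → E₁ → E₂ → (E₂ →L[ℝ] E₁))
    (hHsa : ∀ t ∈ Finset.Icc 1 T, ∀ (x : E₁) (y : E₂) (v u : E₂),
      ⟪H t x y v, u⟫ = ⟪v, H t x y u⟫)
    (hHcoer : ∀ t ∈ Finset.Icc 1 T, ∀ (x : E₁) (y : E₂) (v : E₂),
      μ_g * ‖v‖ ^ 2 ≤ ⟪H t x y v, v⟫)
    (hHbd : ∀ t ∈ Finset.Icc 1 T, ∀ (x : E₁) (y : E₂), ‖H t x y‖ ≤ L_g1)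
    (hJbd : ∀ t ∈ Finset.Icc 1 T, ∀ (x : E₁) (y : E₂), ‖J t x y‖ ≤ L_g1)
    (hHlip : ∀ t ∈ Finset.Icc 1 T, ∀ (x x' : E₁) (y y' : E₂),
      ‖H t x y - H t x' y'‖ ^ 2 ≤ L_g2 ^ 2 * (‖x - x'‖ ^ 2 + ‖y - y'‖ ^ 2))
    (hJlip : ∀ t ∈ Finset.Icc 1 T, ∀ (x x' : E₁) (y y' : E₂),
      ‖J t x y - J t x' y'‖ ^ 2 ≤ L_g2 ^ 2 * (‖x - x'‖ ^ 2 + ‖y - y'‖ ^ 2))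
    -- solution of the linear system and the hypergradient of F
    (vstar : ℕ → E₁ → E₂ → E₂)
    (hvstar : ∀ t ∈ Finset.Icc 1 T, ∀ (x : E₁) (y : E₂), H t x y (vstar t x y) = fy t x y)
    (F : ℕ → E₁ → ℝ)
    (gradF : ℕ → E₁ → E₁)
    (hgradFdef : ∀ (t : ℕ) (x : E₁),
      gradF t x = fx t x (ystar t x) - J t x (ystar t x) (vstar t x (ystar t x)))
    (hFbd : ∀ t ∈ Finset.Icc 1 T, ∀ x : E₁, |F t x| ≤ Q)
    (hFgrad : ∀ t ∈ Finset.Icc 1 T, ∀ x : E₁, HasGradientAt (F t) (gradF t x) x)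
    (hFlip : ∀ t ∈ Finset.Icc 1 T, ∀ x x' : E₁,
      ‖gradF t x - gradF t x'‖ ≤ L_F * ‖x - x'‖)
    -- algorithm parameters
    (δ β γ : ℝ) (M : ℕ)
    (hβ : 0 < β) (hβ' : β ≤ 1 / L_g1)
    (hM : (1 - β * μ_g) ^ M ≤ 1 / (T : ℝ))
    (hγ : 0 < γ) (hγ' : γ ≤ 1 / (2 * L_F))
    -- iterates
    (x : ℕ → E₁) (y : ℕ → E₂) (v : ℕ → E₂)
    (hxX : ∀ t ∈ Finset.Icc 1 (T + 1), x t ∈ X)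
    (hv1 : ‖v 1‖ ≤ L_f0 / μ_g)
    (hinner : ∀ t ∈ Finset.Icc 1 T, ‖gy t (x t) (y (t + 1))‖ ≤ δ)
    (hvstep : ∀ t ∈ Finset.Icc 1 T, v (t + 1) =
      (fun u : E₂ =>
        projV (u - β • (H t (x t) (y (t + 1)) u - fy t (x t) (y (t + 1)))))^[M] (v t))
    (hxstep : ∀ t ∈ Finset.Icc 1 T, x (t + 1) =
      projX (x t - γ • (fx t (x t) (y (t + 1)) - J t (x t) (y (t + 1)) (v (t + 1))))) :
    ∑ t ∈ Finset.Icc 1 T, ‖γ⁻¹ • (x t - projX (x t - γ • gradF t (x t)))‖ ^ 2 ≤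
      16 * Q / γ + 6 * κ_F * δ ^ 2 * T + 768 * L_f0 ^ 2 * κ_g ^ 2 +
      (8 / γ) * ∑ t ∈ Finset.Icc 2 T, ⨆ z : E₁, |F t z - F (t - 1) z| := by
  have hLg1 : 0 < L_g1 := hμ.trans_le hμL
  have hprojV' : IsMetricProjection (Metric.closedBall 0 (L_f0 / μ_g)) projV := fun z =>
    ⟨mem_closedBall_zero_iff.2 (hprojV z).1,
      fun u hu => (hprojV z).2 u (mem_closedBall_zero_iff.1 hu)⟩
  have hball : ∀ t ∈ Finset.Icc 1 T, ‖v t‖ ≤ L_f0 / μ_g := fun t ht =>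
    mem_closedBall_zero_iff.1 <| forall_mem_of_eq_iterate (fun _ _ _ => (hprojV' _).1)
      (mem_closedBall_zero_iff.2 hv1) hvstep t ht
  have hγL : γ * L_F ≤ 1 / 2 := by
    rw [le_div_iff₀ (by positivity)] at hγ'
    linarith
  have hκg0 : 0 < κ_g := hκg ▸ div_pos hLg1 hμ
  have hsolver_err : (2 * L_f0 * (L_g1 / μ_g) * (1 - β * μ_g) ^ M) ^ 2 ≤
      4 * L_f0 ^ 2 * κ_g ^ 2 / T ^ 2 := by
    have hρ : 0 ≤ 1 - β * μ_g := by
      nlinarith [(le_div_iff₀ hLg1).1 hβ']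
    rw [← hκg, show 4 * L_f0 ^ 2 * κ_g ^ 2 / T ^ 2 = (2 * L_f0 * κ_g * (1 / T)) ^ 2 by ring]
    gcongr
  have hround : ∀ t ∈ Finset.Icc 1 T, ‖gradientMapping projX (x t) (gradF t (x t)) γ‖ ^ 2 ≤
        4 / γ * (F t (x t) - F t (x (t + 1))) +
          (6 * κ_F * δ ^ 2 + 192 * L_f0 ^ 2 * κ_g ^ 2 / T ^ 2) := by
    intro t ht
    have herr := sq_norm_hypergrad_sub_approxHypergrad_le hμ hμL hLf0.le hLf1.le hLg2.le hβ.le hβ'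
      (hfbd t ht) (hflip t ht) (hgy t ht) (hgsc t ht) (hymin t ht) (hHsa t ht) (hHcoer t ht)
      (hHbd t ht) (hJbd t ht) (hHlip t ht) (hJlip t ht) (hvstar t ht) hprojV' (x t)
      (hball t ht) (hinner t ht) M
    have hgrad : gradF t (x t) = approxHypergrad (fx t) (J t) (x t) (ystar t (x t))
        (vstar t (x t) (ystar t (x t))) := hgradFdef t (x t)
    rw [← hvstep t ht, ← hκF, ← hgrad] at herr
    have hstep := sq_norm_gradientMapping_le hprojX hXconv (hFgrad t ht) (hFlip t ht) hγ hγL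
      (hxX t (Finset.mem_Icc.2 ⟨(Finset.mem_Icc.1 ht).1, by grind⟩))
      (approxHypergrad (fx t) (J t) (x t) (y (t + 1)) (v (t + 1)))
    have hxs : x (t + 1) =
        projX (x t - γ • approxHypergrad (fx t) (J t) (x t) (y (t + 1)) (v (t + 1))) :=
      hxstep t ht
    rw [← hxs] at hstep
    linear_combination hstep + 6 * herr + 48 * hsolver_err
  calc _ ≤ 4 / γ * (2 * Q) + T * (6 * κ_F * δ ^ 2 + 192 * L_f0 ^ 2 * κ_g ^ 2 / T ^ 2) +
        4 / γ * ∑ t ∈ Finset.Icc 2 T, ⨆ z : E₁, |F t z - F (t - 1) z| :=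
      sum_le_of_le_mul_sub_add F x hT (by positivity) hFbd hround
    _ ≤ _ := by
      have hS : 0 ≤ ∑ t ∈ Finset.Icc 2 T, ⨆ z : E₁, |F t z - F (t - 1) z| :=
        Finset.sum_nonneg fun t _ => Real.iSup_nonneg fun z => abs_nonneg _
      have hT' : (1 : ℝ) ≤ T := by exact_mod_cast hT
      have hlast : T * (192 * L_f0 ^ 2 * κ_g ^ 2 / T ^ 2) ≤ 768 * L_f0 ^ 2 * κ_g ^ 2 := by
        rw [show (T : ℝ) * (192 * L_f0 ^ 2 * κ_g ^ 2 / T ^ 2) = 192 * L_f0 ^ 2 * κ_g ^ 2 / T by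
          field_simp]
        exact (div_le_self (by positivity) hT').trans (by nlinarith [sq_nonneg (L_f0 * κ_g)])
      linear_combination hlast + 8 * div_nonneg hQ.le hγ.le + 4 * div_nonneg hS hγ.le

/-- Optimal standard bilevel local regret of the adaptive inner-loop online bilevel
optimizer (AOBO, Theorem 3.1): under the standing bilevel assumptions, if at each round
the inner solution is computed to accuracy `‖∇_y g_t(x_t,y_{t+1})‖ ≤ δ`, the linear
system is solved by `M` projected gradient steps with `(1−βμ_g)^M ≤ 1/T`, and the outer
iterate is a projected step along the approximate hypergradient, then
`Σ_{t=1}^T ‖𝒢_𝒳(x_t, ∇F_t(x_t), γ)‖² ≤ 16Q/γ + 6κ_F δ²T + 768 L_{f,0}²κ_g²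
  + (8/γ)·Σ_{t=2}^T sup_x |F_t(x) − F_{t−1}(x)|`.
Lipschitz conditions with respect to the ℓ² norm on `E₁ × E₂` are expressed by squared
component inequalities. -/
theorem aobo_regret_bound {E₁ E₂ : Type*}
    [NormedAddCommGroup E₁] [InnerProductSpace ℝ E₁] [FiniteDimensional ℝ E₁]
    [NormedAddCommGroup E₂] [InnerProductSpace ℝ E₂] [FiniteDimensional ℝ E₂]
    -- constants
    (μ_g L_g1 L_f0 L_f1 L_g2 L_F Q : ℝ)
    (hμ : 0 < μ_g) (hμL : μ_g ≤ L_g1) (hLf0 : 0 < L_f0) (hLf1 : 0 < L_f1)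
    (hLg2 : 0 < L_g2) (hLF : 0 < L_F) (hQ : 0 < Q)
    (κ_g κ_F : ℝ) (hκg : κ_g = L_g1 / μ_g)
    (hκF : κ_F = 2 * L_f1 ^ 2 / μ_g ^ 2 + 4 * L_f0 ^ 2 * L_g2 ^ 2 / μ_g ^ 4 +
      16 * L_f1 ^ 2 * L_g1 ^ 2 / μ_g ^ 4 + 16 * L_f0 ^ 2 * L_g1 ^ 2 * L_g2 ^ 2 / μ_g ^ 6)
    (T : ℕ) (hT : 1 ≤ T)
    -- the feasible set and its metric projection
    (X : Set E₁) (hXne : X.Nonempty) (hXcl : IsClosed X) (hXconv : Convex ℝ X)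
    (projX : E₁ → E₁)
    (hprojX : ∀ z : E₁, projX z ∈ X ∧ ∀ u ∈ X, ‖z - projX z‖ ≤ ‖z - u‖)
    -- the metric projection onto the ball V = {‖v‖ ≤ L_f0/μ_g}
    (projV : E₂ → E₂)
    (hprojV : ∀ z : E₂, ‖projV z‖ ≤ L_f0 / μ_g ∧
      ∀ u : E₂, ‖u‖ ≤ L_f0 / μ_g → ‖z - projV z‖ ≤ ‖z - u‖)
    -- upper-level objectives and their partial gradients
    (f : ℕ → E₁ → E₂ → ℝ) (fx : ℕ → E₁ → E₂ → E₁) (fy : ℕ → E₁ → E₂ → E₂)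
    (hfx : ∀ t ∈ Finset.Icc 1 T, ∀ (x : E₁) (y : E₂),
      HasGradientAt (fun x' => f t x' y) (fx t x y) x)
    (hfy : ∀ t ∈ Finset.Icc 1 T, ∀ (x : E₁) (y : E₂),
      HasGradientAt (fun y' => f t x y') (fy t x y) y)
    (hfbd : ∀ t ∈ Finset.Icc 1 T, ∀ (x : E₁) (y : E₂),
      ‖fx t x y‖ ^ 2 + ‖fy t x y‖ ^ 2 ≤ L_f0 ^ 2)
    (hflip : ∀ t ∈ Finset.Icc 1 T, ∀ (x x' : E₁) (y y' : E₂),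
      ‖fx t x y - fx t x' y'‖ ^ 2 + ‖fy t x y - fy t x' y'‖ ^ 2 ≤
        L_f1 ^ 2 * (‖x - x'‖ ^ 2 + ‖y - y'‖ ^ 2))
    -- inner-level objectives: strongly convex with unique minimizer ystar
    (g : ℕ → E₁ → E₂ → ℝ) (gy : ℕ → E₁ → E₂ → E₂) (ystar : ℕ → E₁ → E₂)
    (hgy : ∀ t ∈ Finset.Icc 1 T, ∀ (x : E₁) (y : E₂), HasGradientAt (g t x) (gy t x y) y)
    (hgsc : ∀ t ∈ Finset.Icc 1 T, ∀ x : E₁, StrongConvexOn Set.univ μ_g (g t x))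
    (hymin : ∀ t ∈ Finset.Icc 1 T, ∀ (x : E₁) (y : E₂), g t x (ystar t x) ≤ g t x y)
    (hyuniq : ∀ t ∈ Finset.Icc 1 T, ∀ (x : E₁) (y : E₂),
      (∀ y' : E₂, g t x y ≤ g t x y') → y = ystar t x)
    (hgylip : ∀ t ∈ Finset.Icc 1 T, ∀ (x x' : E₁) (y y' : E₂),
      ‖gy t x y - gy t x' y'‖ ^ 2 ≤ L_g1 ^ 2 * (‖x - x'‖ ^ 2 + ‖y - y'‖ ^ 2))
    -- Hessian data
    (H : ℕ → E₁ → E₂ → (E₂ →L[ℝ] E₂)) (J : ℕ → E₁ → E₂ → (E₂ →L[ℝ] E₁))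
    (hHsa : ∀ t ∈ Finset.Icc 1 T, ∀ (x : E₁) (y : E₂) (v u : E₂),
      ⟪H t x y v, u⟫ = ⟪v, H t x y u⟫)
    (hHcoer : ∀ t ∈ Finset.Icc 1 T, ∀ (x : E₁) (y : E₂) (v : E₂),
      μ_g * ‖v‖ ^ 2 ≤ ⟪H t x y v, v⟫)
    (hHbd : ∀ t ∈ Finset.Icc 1 T, ∀ (x : E₁) (y : E₂), ‖H t x y‖ ≤ L_g1)
    (hJbd : ∀ t ∈ Finset.Icc 1 T, ∀ (x : E₁) (y : E₂), ‖J t x y‖ ≤ L_g1)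
    (hHlip : ∀ t ∈ Finset.Icc 1 T, ∀ (x x' : E₁) (y y' : E₂),
      ‖H t x y - H t x' y'‖ ^ 2 ≤ L_g2 ^ 2 * (‖x - x'‖ ^ 2 + ‖y - y'‖ ^ 2))
    (hJlip : ∀ t ∈ Finset.Icc 1 T, ∀ (x x' : E₁) (y y' : E₂),
      ‖J t x y - J t x' y'‖ ^ 2 ≤ L_g2 ^ 2 * (‖x - x'‖ ^ 2 + ‖y - y'‖ ^ 2))
    -- solution of the linear system and the hypergradient of F
    (vstar : ℕ → E₁ → E₂ → E₂)
    (hvstar : ∀ t ∈ Finset.Icc 1 T, ∀ (x : E₁) (y : E₂), H t x y (vstar t x y) = fy t x y)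
    (F : ℕ → E₁ → ℝ) (hFdef : ∀ (t : ℕ) (x : E₁), F t x = f t x (ystar t x))
    (gradF : ℕ → E₁ → E₁)
    (hgradFdef : ∀ (t : ℕ) (x : E₁),
      gradF t x = fx t x (ystar t x) - J t x (ystar t x) (vstar t x (ystar t x)))
    (hFbd : ∀ t ∈ Finset.Icc 1 T, ∀ x : E₁, |F t x| ≤ Q)
    (hFgrad : ∀ t ∈ Finset.Icc 1 T, ∀ x : E₁, HasGradientAt (F t) (gradF t x) x)
    (hFlip : ∀ t ∈ Finset.Icc 1 T, ∀ x x' : E₁,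
      ‖gradF t x - gradF t x'‖ ≤ L_F * ‖x - x'‖)
    -- algorithm parameters
    (δ β γ : ℝ) (M : ℕ)
    (hδ : 0 < δ) (hβ : 0 < β) (hβ' : β ≤ 1 / L_g1)
    (hM : (1 - β * μ_g) ^ M ≤ 1 / (T : ℝ))
    (hγ : 0 < γ) (hγ' : γ ≤ 1 / (2 * L_F))
    -- iterates
    (x : ℕ → E₁) (y : ℕ → E₂) (v : ℕ → E₂)
    (hxX : ∀ t ∈ Finset.Icc 1 (T + 1), x t ∈ X)
    (hv1 : ‖v 1‖ ≤ L_f0 / μ_g)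
    (hinner : ∀ t ∈ Finset.Icc 1 T, ‖gy t (x t) (y (t + 1))‖ ≤ δ)
    (hvstep : ∀ t ∈ Finset.Icc 1 T, v (t + 1) =
      (fun u : E₂ =>
        projV (u - β • (H t (x t) (y (t + 1)) u - fy t (x t) (y (t + 1)))))^[M] (v t))
    (hxstep : ∀ t ∈ Finset.Icc 1 T, x (t + 1) =
      projX (x t - γ • (fx t (x t) (y (t + 1)) - J t (x t) (y (t + 1)) (v (t + 1))))) :
    ∑ t ∈ Finset.Icc 1 T, ‖γ⁻¹ • (x t - projX (x t - γ • gradF t (x t)))‖ ^ 2 ≤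
      16 * Q / γ + 6 * κ_F * δ ^ 2 * T + 768 * L_f0 ^ 2 * κ_g ^ 2 +
      (8 / γ) * ∑ t ∈ Finset.Icc 2 T, ⨆ z : E₁, |F t z - F (t - 1) z| :=
  aobo_regret_bound_general μ_g L_g1 L_f0 L_f1 L_g2 L_F Q hμ hμL hLf0 hLf1 hLg2 hLF hQ κ_g κ_F hκg
    hκF T hT X hXconv projX hprojX projV hprojV fx fy hfbd hflip g gy ystar hgy hgsc hymin H J hHsa
    hHcoer hHbd hJbd hHlip hJlip vstar hvstar F gradF hgradFdef hFbd hFgrad hFlip δ β γ M hβ hβ' hM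
    hγ hγ' x y v hxX hv1 hinner hvstep hxstep
end

section
/- Let c > 0, let N, B ≥ 1 be integers, let T = N·B, and let d ≥ N. For t ∈ {1,…,T} let k(t) := ⌈t/B⌉ ∈ {1,…,N}, and define F_t : ℝ^d → ℝ by F_t(x) := 2c·σ([x]_{k(t)}), where σ(z) := 1/(1 + e^{−z}) and [x]_i denotes the i-th coordinate of x. (These functions arise as F_t(x) = f_t(x, y*_t(x)) for the bilevel problem with upper-level f_t(x,y) = cσ([y]_{k(t)}) + cσ([x]_{k(t)}) and inner level g(x,y) = (μ_g/2)‖y − x‖², whose unique inner minimizer is y*(x) = x.) Then: (i) Σ_{t=2}^T sup_{x∈ℝ^d} |F_t(x) − F_{t−1}(x)| ≤ 2c(N−1); and (ii) for every sequence x_1,…,x_T in ℝ^d such that for each k ∈ {1,…,N} the k-th coordinate of x_{(k−1)B+1} is zero, one has Σ_{t=1}^T ‖∇F_t(x_t)‖² ≥ N c²/4. -/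
/-- The sigmoid function `σ(z) = 1/(1 + e^{-z})`. -/
noncomputable def sigmoid (z : ℝ) : ℝ := 1 / (1 + Real.exp (-z))

/-!
`F_t` only changes at a block boundary, where it passes from one coordinate to the next; as `σ`
takes values in `(0, 1)`, such a change costs at most `2c` in sup norm, and the per-step bounds
`2c (κ t - κ (t - 1))` telescope to `2c (N - 1)`. At the start of block `k` the active coordinate
of the iterate vanishes, and there `∇F_t = 2c σ'(0) eᵢ` has norm `2c · 1/4 = c/2`.
-/

open Finset

lemma sigmoid_eq_real_sigmoid : sigmoid = Real.sigmoid := by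
  funext z
  rw [sigmoid, Real.sigmoid_def, one_div]

lemma abs_sigmoid_sub_sigmoid_lt_one (a b : ℝ) : |sigmoid a - sigmoid b| < 1 := by
  rw [sigmoid_eq_real_sigmoid]
  exact abs_sub_lt_of_nonneg_of_lt (Real.sigmoid_nonneg a) (Real.sigmoid_lt_one a)
    (Real.sigmoid_nonneg b) (Real.sigmoid_lt_one b)

lemma hasDerivAt_sigmoid_zero : HasDerivAt sigmoid (1 / 4) 0 := by
  have h := Real.hasDerivAt_sigmoid 0
  rw [Real.sigmoid_zero] at h
  rw [sigmoid_eq_real_sigmoid]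
  convert h using 1
  norm_num

lemma hasGradientAt_comp_apply {ι : Type*} [Fintype ι] [DecidableEq ι] {f : ℝ → ℝ} {f' : ℝ}
    (i : ι) {x : EuclideanSpace ℝ ι} (hf : HasDerivAt f f' (x i)) :
    HasGradientAt (fun y : EuclideanSpace ℝ ι => f (y i)) (f' • EuclideanSpace.single i 1) x := by
  have h : HasFDerivAt (fun y : EuclideanSpace ℝ ι => f (y i)) (f' • EuclideanSpace.proj i) x :=
    hf.comp_hasFDerivAt (f := fun y : EuclideanSpace ℝ ι => y i) x
      (EuclideanSpace.proj i : StrongDual ℝ (EuclideanSpace ℝ ι)).hasFDerivAt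
  have hdual : InnerProductSpace.toDual ℝ (EuclideanSpace ℝ ι) (f' • EuclideanSpace.single i 1) =
      f' • EuclideanSpace.proj i := by
    ext y
    simp [EuclideanSpace.inner_single_left]
  rwa [hasGradientAt_iff_hasFDerivAt, hdual]

lemma norm_gradient_const_mul_sigmoid_apply {ι : Type*} [Fintype ι] [DecidableEq ι] (a : ℝ)
    (i : ι) {x : EuclideanSpace ℝ ι} (hx : x i = 0) :
    ‖gradient (fun y : EuclideanSpace ℝ ι => a * sigmoid (y i)) x‖ = |a| / 4 := by
  have hf : HasDerivAt (fun z => a * sigmoid z) (a * (1 / 4)) (x i) :=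
    hx ▸ hasDerivAt_sigmoid_zero.const_mul a
  rw [(hasGradientAt_comp_apply i hf).gradient, norm_smul, PiLp.norm_single]
  simp [div_eq_mul_inv]

lemma iSup_abs_sub_const_mul_sigmoid_apply_le {d : ℕ} {a : ℝ} (ha : 0 ≤ a) {i j : Fin d}
    (hji : j ≤ i) :
    ⨆ x : EuclideanSpace ℝ (Fin d), |a * sigmoid (x i) - a * sigmoid (x j)| ≤
      a * (((i : ℕ) : ℝ) - (j : ℕ)) := by
  have hji' : ((j : ℕ) : ℝ) ≤ (i : ℕ) := by exact_mod_cast hji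
  refine Real.iSup_le (fun x => ?_) (mul_nonneg ha (sub_nonneg.2 hji'))
  rcases hji.eq_or_lt with rfl | hlt
  · simp
  · have hgap : (1 : ℝ) ≤ ((i : ℕ) : ℝ) - (j : ℕ) := by
      have : (j : ℕ) + 1 ≤ i := hlt
      rw [le_sub_iff_add_le']
      exact_mod_cast this
    calc |a * sigmoid (x i) - a * sigmoid (x j)|
        = a * |sigmoid (x i) - sigmoid (x j)| := by rw [← mul_sub, abs_mul, abs_of_nonneg ha]
      _ ≤ a * 1 := by gcongr; exact (abs_sigmoid_sub_sigmoid_lt_one _ _).le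
      _ ≤ a * (((i : ℕ) : ℝ) - (j : ℕ)) := by gcongr

lemma sum_Icc_two_sub_pred {G : Type*} [AddCommGroup G] (u : ℕ → G) {T : ℕ} (hT : 1 ≤ T) :
    ∑ t ∈ Icc 2 T, (u t - u (t - 1)) = u T - u 1 := by
  induction T, hT using Nat.le_induction with
  | base => simp
  | succ T hT ih => rw [sum_Icc_succ_top (by omega), ih, Nat.add_sub_cancel]; abel

lemma sum_iSup_abs_sub_const_mul_sigmoid_apply_le {d T : ℕ} {a : ℝ} (ha : 0 ≤ a) (hT : 1 ≤ T)
    {κ : ℕ → Fin d} (hκ : ∀ t ∈ Icc 2 T, κ (t - 1) ≤ κ t) :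
    ∑ t ∈ Icc 2 T, ⨆ x : EuclideanSpace ℝ (Fin d),
        |a * sigmoid (x (κ t)) - a * sigmoid (x (κ (t - 1)))| ≤
      a * (((κ T : ℕ) : ℝ) - (κ 1 : ℕ)) :=
  calc _ ≤ ∑ t ∈ Icc 2 T, a * (((κ t : ℕ) : ℝ) - (κ (t - 1) : ℕ)) :=
        sum_le_sum fun t ht => iSup_abs_sub_const_mul_sigmoid_apply_le ha (hκ t ht)
    _ = a * (((κ T : ℕ) : ℝ) - (κ 1 : ℕ)) := by
        rw [← mul_sum, sum_Icc_two_sub_pred (fun t => ((κ t : ℕ) : ℝ)) hT]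

lemma sum_le_sum_of_injOn_of_mapsTo {ι κ M : Type*} [AddCommMonoid M] [PartialOrder M]
    [IsOrderedAddMonoid M] [DecidableEq κ] {s : Finset ι} {t : Finset κ} {e : ι → κ}
    (he : Set.InjOn e s) (hst : Set.MapsTo e s t) {f : κ → M} (hf : ∀ j ∈ t, 0 ≤ f j) :
    ∑ i ∈ s, f (e i) ≤ ∑ j ∈ t, f j := by
  rw [← sum_image he]
  exact sum_le_sum_of_subset_of_nonneg (image_subset_iff.2 fun i hi => hst hi)
    fun j hj _ => hf j hj

lemma blockStart_mapsTo {N B : ℕ} (hB : 1 ≤ B) :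
    Set.MapsTo (fun k => (k - 1) * B + 1) (Icc 1 N) (Icc 1 (N * B)) := by
  intro k hk
  simp only [coe_Icc, Set.mem_Icc] at hk ⊢
  have hkB : (k - 1) * B + B ≤ N * B := by
    rw [← Nat.succ_mul, Nat.succ_eq_add_one, Nat.sub_add_cancel hk.1]
    exact Nat.mul_le_mul_right B hk.2
  omega

lemma blockStart_injOn {N B : ℕ} (hB : 1 ≤ B) :
    Set.InjOn (fun k => (k - 1) * B + 1) (Icc 1 N) := by
  intro a ha b hb hab
  simp only [coe_Icc, Set.mem_Icc, add_left_inj] at ha hb hab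
  have := Nat.eq_of_mul_eq_mul_right hB hab
  omega

lemma sub_one_div_eq_of_eq_mul {N B T : ℕ} (hN : 1 ≤ N) (hB : 1 ≤ B) (hT : T = N * B) :
    (T - 1) / B = N - 1 := by
  subst hT
  obtain ⟨n, rfl⟩ : ∃ n, N = n + 1 := ⟨N - 1, by omega⟩
  rw [Nat.add_sub_cancel, Nat.succ_mul]
  apply Nat.div_eq_of_lt_le <;> grind

theorem standard_regret_lower_bound_construction_general
    (c : ℝ) (hc : 0 < c) (N B d : ℕ) (hN : 1 ≤ N) (hB : 1 ≤ B)
    (T : ℕ) (hT : T = N * B)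
    (κ : ℕ → Fin d) (hκ : ∀ t ∈ Finset.Icc 1 T, (κ t : ℕ) = (t - 1) / B)
    (F : ℕ → EuclideanSpace ℝ (Fin d) → ℝ)
    (hF : ∀ t ∈ Finset.Icc 1 T, ∀ x : EuclideanSpace ℝ (Fin d),
      F t x = 2 * c * sigmoid (x (κ t))) :
    (∑ t ∈ Finset.Icc 2 T, ⨆ x : EuclideanSpace ℝ (Fin d), |F t x - F (t - 1) x|) ≤
        2 * c * ((N : ℝ) - 1) ∧
    ∀ x : ℕ → EuclideanSpace ℝ (Fin d),
      (∀ k ∈ Finset.Icc 1 N, x ((k - 1) * B + 1) (κ ((k - 1) * B + 1)) = 0) →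
      (N : ℝ) * c ^ 2 / 4 ≤ ∑ t ∈ Finset.Icc 1 T, ‖gradient (F t) (x t)‖ ^ 2 := by
  have hT1 : 1 ≤ T := hT ▸ Nat.mul_pos hN hB
  have hmem : ∀ t ∈ Icc 2 T, t ∈ Icc 1 T ∧ t - 1 ∈ Icc 1 T := by
    intro t ht
    simp only [mem_Icc] at ht ⊢
    omega
  have hmono : ∀ t ∈ Icc 2 T, κ (t - 1) ≤ κ t := fun t ht => by
    rw [Fin.le_iff_val_le_val, hκ t (hmem t ht).1, hκ _ (hmem t ht).2]
    exact Nat.div_le_div_right (by omega)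
  refine ⟨?_, fun x hx => ?_⟩
  · calc ∑ t ∈ Icc 2 T, ⨆ x : EuclideanSpace ℝ (Fin d), |F t x - F (t - 1) x|
        = ∑ t ∈ Icc 2 T, ⨆ x : EuclideanSpace ℝ (Fin d),
            |2 * c * sigmoid (x (κ t)) - 2 * c * sigmoid (x (κ (t - 1)))| :=
          sum_congr rfl fun t ht => by simp only [hF t (hmem t ht).1, hF _ (hmem t ht).2]
      _ ≤ 2 * c * (((κ T : ℕ) : ℝ) - (κ 1 : ℕ)) :=
          sum_iSup_abs_sub_const_mul_sigmoid_apply_le (by positivity) hT1 hmono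
      _ = 2 * c * ((N : ℝ) - 1) := by
          rw [hκ T (right_mem_Icc.2 hT1), hκ 1 (left_mem_Icc.2 hT1),
            sub_one_div_eq_of_eq_mul hN hB hT]
          simp [Nat.cast_sub hN]
  · have hblock : ∀ k ∈ Icc 1 N,
        c ^ 2 / 4 ≤ ‖gradient (F ((k - 1) * B + 1)) (x ((k - 1) * B + 1))‖ ^ 2 := by
      intro k hk
      have ht : (k - 1) * B + 1 ∈ Icc 1 T := hT ▸ blockStart_mapsTo hB hk
      rw [show F ((k - 1) * B + 1) = _ from funext (hF _ ht),
        norm_gradient_const_mul_sigmoid_apply _ _ (hx k hk), div_pow, sq_abs]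
      exact (by ring : c ^ 2 / 4 = _).le
    calc (N : ℝ) * c ^ 2 / 4 = ∑ _k ∈ Icc 1 N, c ^ 2 / 4 := by
          rw [sum_const, Nat.card_Icc, Nat.add_sub_cancel, nsmul_eq_mul, mul_div_assoc]
      _ ≤ ∑ k ∈ Icc 1 N, ‖gradient (F ((k - 1) * B + 1)) (x ((k - 1) * B + 1))‖ ^ 2 :=
          sum_le_sum hblock
      _ ≤ ∑ t ∈ Icc 1 T, ‖gradient (F t) (x t)‖ ^ 2 := by
          rw [hT]
          exact sum_le_sum_of_injOn_of_mapsTo (blockStart_injOn hB) (blockStart_mapsTo hB)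
            (f := fun t => ‖gradient (F t) (x t)‖ ^ 2) fun _ _ => by positivity

/-- Lower-bound construction for the standard bilevel local regret: with `T = N·B`,
block index `k(t) = ⌈t/B⌉` (so that the `k(t)`-th coordinate has 0-based index
`(t−1)/B`, recorded by `κ`), and `F_t(x) = 2c·σ([x]_{k(t)})`, one has
(i) `Σ_{t=2}^T sup_x |F_t(x) − F_{t−1}(x)| ≤ 2c(N−1)`, and
(ii) for any iterates whose relevant coordinate vanishes at the start of each block,
`Σ_{t=1}^T ‖∇F_t(x_t)‖² ≥ N c²/4`. -/
theorem standard_regret_lower_bound_construction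
    (c : ℝ) (hc : 0 < c) (N B d : ℕ) (hN : 1 ≤ N) (hB : 1 ≤ B)
    (T : ℕ) (hT : T = N * B) (hd : N ≤ d)
    (κ : ℕ → Fin d) (hκ : ∀ t ∈ Finset.Icc 1 T, (κ t : ℕ) = (t - 1) / B)
    (F : ℕ → EuclideanSpace ℝ (Fin d) → ℝ)
    (hF : ∀ t ∈ Finset.Icc 1 T, ∀ x : EuclideanSpace ℝ (Fin d),
      F t x = 2 * c * sigmoid (x (κ t))) :
    (∑ t ∈ Finset.Icc 2 T, ⨆ x : EuclideanSpace ℝ (Fin d), |F t x - F (t - 1) x|) ≤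
        2 * c * ((N : ℝ) - 1) ∧
    ∀ x : ℕ → EuclideanSpace ℝ (Fin d),
      (∀ k ∈ Finset.Icc 1 N, x ((k - 1) * B + 1) (κ ((k - 1) * B + 1)) = 0) →
      (N : ℝ) * c ^ 2 / 4 ≤ ∑ t ∈ Finset.Icc 1 T, ‖gradient (F t) (x t)‖ ^ 2 :=
  standard_regret_lower_bound_construction_general c hc N B d hN hB T hT κ hκ F hF
end

section
/- Let c > 0, let T ≥ 1, d ≥ T, let w ≥ 1 be an integer, η ∈ (0,1), and W := Σ_{i=0}^{w−1} η^i. For s ∈ {1,…,T} define F_s : ℝ^d → ℝ by F_s(x) := c·σ(σ([x]_s)/√d) + c·σ([x]_s), where σ(z) := 1/(1 + e^{−z}) and [x]_i denotes the i-th coordinate, and set F_s :≡ 0 for s ≤ 0. (These arise as F_s(x) = f_s(x, y*(x)) for the bilevel problem with f_s(x,y) = cσ([y]_s) + cσ([x]_s) and g(x,y) = (μ/2)‖y − φ(x)‖², where [φ(x)]_i = σ([x]_i)/√d, whose unique inner minimizer is y*(x) = φ(x).) Define the window average F̂_{t,w}(x) := (1/W) Σ_{i=0}^{w−1} η^i F_{t−i}(x).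 Then for every sequence x_1,…,x_T in ℝ^d such that for each t the t-th coordinate of x_t is zero, Σ_{t=1}^T ‖∇F̂_{t,w}(x_t)‖² ≥ c² T / (16 W²). -/
open Finset

/-- `F_s(x) = sigmoidProfile c √d ([x]_s)`: the composite `f_s(x, y*(x))` seen as a function of
the single coordinate it depends on. -/
noncomputable def sigmoidProfile (c r z : ℝ) : ℝ :=
  c * sigmoid (sigmoid z / r) + c * sigmoid z

lemma differentiable_sigmoidProfile (c r : ℝ) : Differentiable ℝ (sigmoidProfile c r) := by
  unfold sigmoidProfile
  rw [sigmoid_eq_real_sigmoid]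
  fun_prop

lemma sq_div_sixteen_le_deriv_sigmoidProfile_zero_sq (c : ℝ) {r : ℝ} (hr : 0 ≤ r) :
    c ^ 2 / 16 ≤ deriv (sigmoidProfile c r) 0 ^ 2 := by
  set σ' : ℝ → ℝ := fun z => Real.sigmoid z * (1 - Real.sigmoid z)
  have hσ : ∀ z, HasDerivAt sigmoid (σ' z) z := by
    rw [sigmoid_eq_real_sigmoid]; exact Real.hasDerivAt_sigmoid
  have hσ0 : σ' 0 = 1 / 4 := by norm_num [σ', Real.sigmoid_zero]
  have hderiv :
      HasDerivAt (sigmoidProfile c r) (c * (σ' (sigmoid 0 / r) * (σ' 0 / r) + σ' 0)) 0 := by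
    have : HasDerivAt (sigmoidProfile c r) _ 0 :=
      (((hσ _).comp 0 ((hσ 0).div_const r)).const_mul c).add ((hσ 0).const_mul c)
    exact this.congr_deriv (by ring)
  have hk : 0 ≤ σ' (sigmoid 0 / r) * (σ' 0 / r) :=
    mul_nonneg (mul_nonneg (Real.sigmoid_nonneg _) (sub_nonneg.mpr (Real.sigmoid_le_one _)))
      (div_nonneg (by rw [hσ0]; norm_num) hr)
  rw [hderiv.deriv, mul_pow]
  calc c ^ 2 / 16 = c ^ 2 * σ' 0 ^ 2 := by rw [hσ0]; ring
    _ ≤ _ := by gcongr; linarith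

section Coordinates

variable {ι : Type*} [Fintype ι]

lemma gradient_apply_eq_fderiv_single [DecidableEq ι] (f : EuclideanSpace ℝ ι → ℝ)
    (x : EuclideanSpace ℝ ι) (i : ι) : gradient f x i = fderiv ℝ f x (EuclideanSpace.single i 1) := by
  rw [← inner_gradient_left, EuclideanSpace.inner_single_right]
  simp

lemma differentiableAt_comp_apply {h : ℝ → ℝ} {x : EuclideanSpace ℝ ι} {j : ι}
    (hh : DifferentiableAt ℝ h (x j)) :
    DifferentiableAt ℝ (fun y : EuclideanSpace ℝ ι => h (y j)) x :=
  hh.comp x (EuclideanSpace.proj j : EuclideanSpace ℝ ι →L[ℝ] ℝ).differentiableAt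

lemma fderiv_comp_apply_single [DecidableEq ι] {h : ℝ → ℝ} {x : EuclideanSpace ℝ ι} {j : ι}
    (hh : DifferentiableAt ℝ h (x j)) (k : ι) :
    fderiv ℝ (fun y : EuclideanSpace ℝ ι => h (y j)) x (EuclideanSpace.single k 1) =
      if j = k then deriv h (x j) else 0 := by
  have : HasFDerivAt (fun y : EuclideanSpace ℝ ι => h (y j)) _ x :=
    hh.hasDerivAt.comp_hasFDerivAt x
      (EuclideanSpace.proj j : EuclideanSpace ℝ ι →L[ℝ] ℝ).hasFDerivAt
  rw [this.fderiv]
  simp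

end Coordinates

lemma fderiv_windowAverage_apply {E : Type*} [NormedAddCommGroup E] [NormedSpace ℝ E]
    {F : ℕ → E → ℝ} {y v : E} {t w : ℕ} (W η : ℝ) (hw : 1 ≤ w)
    (hdiff : ∀ i < w, DifferentiableAt ℝ (F (t - i)) y)
    (hzero : ∀ i < w, i ≠ 0 → fderiv ℝ (F (t - i)) y v = 0) :
    fderiv ℝ (fun x => 1 / W * ∑ i ∈ range w, η ^ i * F (t - i) x) y v =
      1 / W * fderiv ℝ (F t) y v := by
  have hdiff' : ∀ i ∈ range w, DifferentiableAt ℝ (fun x => η ^ i * F (t - i) x) y :=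
    fun i hi => (hdiff i (mem_range.mp hi)).const_mul _
  rw [fderiv_const_mul (DifferentiableAt.fun_sum hdiff'), fderiv_fun_sum hdiff']
  simp only [smul_apply, _root_.sum_apply, smul_eq_mul]
  rw [sum_eq_single_of_mem 0 (mem_range.mpr hw)]
  · simp
  · intro i hi hi0
    rw [fderiv_const_mul (hdiff i (mem_range.mp hi)), smul_apply,
      hzero i (mem_range.mp hi) hi0, smul_zero]

section Construction

variable {c : ℝ} {T d : ℕ} {κ : ℕ → Fin d} {F : ℕ → EuclideanSpace ℝ (Fin d) → ℝ}

lemma differentiableAt_objective (hF0 : ∀ x, F 0 x = 0)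
    (hF : ∀ s ∈ Icc 1 T, ∀ x, F s x = sigmoidProfile c √d (x (κ s))) {s : ℕ} (hs : s ≤ T)
    (y : EuclideanSpace ℝ (Fin d)) : DifferentiableAt ℝ (F s) y := by
  rcases Nat.eq_zero_or_pos s with rfl | hs0
  · rw [funext hF0]
    exact differentiableAt_const 0
  · rw [funext (hF s (mem_Icc.mpr ⟨hs0, hs⟩))]
    exact differentiableAt_comp_apply (differentiable_sigmoidProfile c √d _)

lemma fderiv_objective_apply_single_self
    (hF : ∀ s ∈ Icc 1 T, ∀ x, F s x = sigmoidProfile c √d (x (κ s))) {t : ℕ} (ht : t ∈ Icc 1 T)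
    (y : EuclideanSpace ℝ (Fin d)) :
    fderiv ℝ (F t) y (EuclideanSpace.single (κ t) 1) = deriv (sigmoidProfile c √d) (y (κ t)) := by
  rw [funext (hF t ht), fderiv_comp_apply_single (differentiable_sigmoidProfile c √d _),
    if_pos rfl]

lemma fderiv_objective_apply_single_eq_zero (hκ : ∀ s ∈ Icc 1 T, (κ s : ℕ) = s - 1)
    (hF0 : ∀ x, F 0 x = 0)
    (hF : ∀ s ∈ Icc 1 T, ∀ x, F s x = sigmoidProfile c √d (x (κ s))) {s t : ℕ} (hs : s ≤ T)
    (ht : t ∈ Icc 1 T) (hst : s ≠ t) (y : EuclideanSpace ℝ (Fin d)) :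
    fderiv ℝ (F s) y (EuclideanSpace.single (κ t) 1) = 0 := by
  rcases Nat.eq_zero_or_pos s with rfl | hs0
  · rw [funext hF0, fderiv_const_apply, zero_apply]
  · have hsT : s ∈ Icc 1 T := mem_Icc.mpr ⟨hs0, hs⟩
    have hκst : κ s ≠ κ t := fun h => by
      have := congrArg Fin.val h
      rw [hκ s hsT, hκ t ht] at this
      have := mem_Icc.mp ht
      omega
    rw [funext (hF s hsT), fderiv_comp_apply_single (differentiable_sigmoidProfile c √d _),
      if_neg hκst]

end Construction

/-- `F_s ≡ 0` for `s ≤ 0` is realized by `F 0 ≡ 0` through the truncated subtraction `t - i`;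
`κ s` is the 0-based index of the `s`-th coordinate. -/
theorem window_regret_lower_bound_construction_general
    (c : ℝ) (T d w : ℕ) (hw : 1 ≤ w)
    (η : ℝ) (W : ℝ)
    (κ : ℕ → Fin d) (hκ : ∀ s ∈ Finset.Icc 1 T, (κ s : ℕ) = s - 1)
    (F : ℕ → EuclideanSpace ℝ (Fin d) → ℝ)
    (hF0 : ∀ x : EuclideanSpace ℝ (Fin d), F 0 x = 0)
    (hF : ∀ s ∈ Finset.Icc 1 T, ∀ x : EuclideanSpace ℝ (Fin d),
      F s x = c * sigmoid (sigmoid (x (κ s)) / Real.sqrt d) + c * sigmoid (x (κ s)))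
    (Fhat : ℕ → EuclideanSpace ℝ (Fin d) → ℝ)
    (hFhat : ∀ (t : ℕ) (x : EuclideanSpace ℝ (Fin d)),
      Fhat t x = (1 / W) * ∑ i ∈ Finset.range w, η ^ i * F (t - i) x)
    (x : ℕ → EuclideanSpace ℝ (Fin d))
    (hx : ∀ t ∈ Finset.Icc 1 T, x t (κ t) = 0) :
    c ^ 2 * T / (16 * W ^ 2) ≤
      ∑ t ∈ Finset.Icc 1 T, ‖gradient (Fhat t) (x t)‖ ^ 2 := by
  have hround : ∀ t ∈ Icc 1 T, c ^ 2 / (16 * W ^ 2) ≤ ‖gradient (Fhat t) (x t)‖ ^ 2 := by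
    intro t ht
    obtain ⟨ht1, htT⟩ := mem_Icc.mp ht
    have hcoord : gradient (Fhat t) (x t) (κ t) = 1 / W * deriv (sigmoidProfile c √d) 0 := by
      rw [gradient_apply_eq_fderiv_single, funext (hFhat t), fderiv_windowAverage_apply W η hw
        (fun i _ => differentiableAt_objective hF0 hF (by omega) _)
        (fun i _ hi => fderiv_objective_apply_single_eq_zero hκ hF0 hF (by omega) ht (by omega) _),
        fderiv_objective_apply_single_self hF ht, hx t ht]
    calc c ^ 2 / (16 * W ^ 2) = c ^ 2 / 16 / W ^ 2 := by ring
      _ ≤ deriv (sigmoidProfile c √d) 0 ^ 2 / W ^ 2 := by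
        gcongr
        exact sq_div_sixteen_le_deriv_sigmoidProfile_zero_sq c (Real.sqrt_nonneg _)
      _ = ‖gradient (Fhat t) (x t) (κ t)‖ ^ 2 := by rw [Real.norm_eq_abs, sq_abs, hcoord]; ring
      _ ≤ ‖gradient (Fhat t) (x t)‖ ^ 2 := by gcongr; exact PiLp.norm_apply_le _ _
  calc c ^ 2 * T / (16 * W ^ 2) = #(Icc 1 T) • (c ^ 2 / (16 * W ^ 2)) := by
        rw [Nat.card_Icc, Nat.add_sub_cancel, nsmul_eq_mul]; ring
    _ ≤ _ := card_nsmul_le_sum _ _ _ hround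

/-- Lower-bound construction for the window-averaged bilevel local regret:
with `F_s(x) = c·σ(σ([x]_s)/√d) + c·σ([x]_s)` for `s ∈ {1,…,T}` (and `F_s ≡ 0` for
`s ≤ 0`, here realized by `F 0 ≡ 0` via truncated subtraction) and window averages
`F̂_{t,w} = (1/W)Σ_{i<w} η^i F_{t−i}`, any iterates whose `t`-th coordinate vanishes at
round `t` satisfy `Σ_{t=1}^T ‖∇F̂_{t,w}(x_t)‖² ≥ c²T/(16W²)`. The 0-based index of the
`s`-th coordinate is recorded by `κ`. -/
theorem window_regret_lower_bound_construction
    (c : ℝ) (hc : 0 < c) (T d w : ℕ) (hT : 1 ≤ T) (hd : T ≤ d) (hw : 1 ≤ w)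
    (η : ℝ) (hη : 0 < η) (hη1 : η < 1)
    (W : ℝ) (hW : W = ∑ i ∈ Finset.range w, η ^ i)
    (κ : ℕ → Fin d) (hκ : ∀ s ∈ Finset.Icc 1 T, (κ s : ℕ) = s - 1)
    (F : ℕ → EuclideanSpace ℝ (Fin d) → ℝ)
    (hF0 : ∀ x : EuclideanSpace ℝ (Fin d), F 0 x = 0)
    (hF : ∀ s ∈ Finset.Icc 1 T, ∀ x : EuclideanSpace ℝ (Fin d),
      F s x = c * sigmoid (sigmoid (x (κ s)) / Real.sqrt d) + c * sigmoid (x (κ s)))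
    (Fhat : ℕ → EuclideanSpace ℝ (Fin d) → ℝ)
    (hFhat : ∀ (t : ℕ) (x : EuclideanSpace ℝ (Fin d)),
      Fhat t x = (1 / W) * ∑ i ∈ Finset.range w, η ^ i * F (t - i) x)
    (x : ℕ → EuclideanSpace ℝ (Fin d))
    (hx : ∀ t ∈ Finset.Icc 1 T, x t (κ t) = 0) :
    c ^ 2 * T / (16 * W ^ 2) ≤
      ∑ t ∈ Finset.Icc 1 T, ‖gradient (Fhat t) (x t)‖ ^ 2 :=
  window_regret_lower_bound_construction_general c T d w hw η W κ hκ F hF0 hF Fhat hFhat x hx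
end

section
/- Let E₁, E₂ be real finite-dimensional inner product spaces and μ_g, L_{f,0}, L_{f,1}, L_{g,1}, L_{g,2} > 0. Let f : E₁ × E₂ → ℝ be differentiable with ∇f L_{f,1}-Lipschitz (with respect to the ℓ² norm on E₁ × E₂), and let J : E₁ × E₂ → (bounded linear operators E₂ → E₁) satisfy ‖J(x,y)‖ ≤ L_{g,1} for all (x,y) and (x,y) ↦ J(x,y) be L_{g,2}-Lipschitz. Let x ∈ E₁, y*, ỹ ∈ E₂ and v*, ṽ ∈ E₂ with ‖v*‖ ≤ L_{f,0}/μ_g. Then ‖(∇_x f(x, y*) − J(x, y*) v*) − (∇_x f(x, ỹ) − J(x, ỹ) ṽ)‖² ≤ (2L_{f,1}² + 4L_{f,0}²L_{g,2}²/μ_g²)·‖ỹ − y*‖² + 4L_{g,1}²·‖ṽ − v*‖². -/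
open scoped RealInnerProductSpace

set_option maxHeartbeats 1000000 in
/-- Per-step hypergradient approximation error bound (Lemma 3.1, per-step form):
`‖(∇_x f(x,y*) − J(x,y*)v*) − (∇_x f(x,ỹ) − J(x,ỹ)ṽ)‖²
  ≤ (2L_{f,1}² + 4L_{f,0}²L_{g,2}²/μ_g²)‖ỹ − y*‖² + 4L_{g,1}²‖ṽ − v*‖²`.
Lipschitzness of `∇f` and of `J` with respect to the ℓ² norm on `E₁ × E₂` is expressed
through the equivalent squared inequalities on the components. -/
theorem hypergradient_error_step {E₁ E₂ : Type*}
    [NormedAddCommGroup E₁] [InnerProductSpace ℝ E₁] [FiniteDimensional ℝ E₁]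
    [NormedAddCommGroup E₂] [InnerProductSpace ℝ E₂] [FiniteDimensional ℝ E₂]
    (μ_g L_f0 L_f1 L_g1 L_g2 : ℝ)
    (hμ : 0 < μ_g) (hLf0 : 0 < L_f0) (hLf1 : 0 < L_f1) (hLg1 : 0 < L_g1) (hLg2 : 0 < L_g2)
    (f : E₁ → E₂ → ℝ) (fx : E₁ → E₂ → E₁) (fy : E₁ → E₂ → E₂)
    (hfx : ∀ (x : E₁) (y : E₂), HasGradientAt (fun x' => f x' y) (fx x y) x)
    (hfy : ∀ (x : E₁) (y : E₂), HasGradientAt (fun y' => f x y') (fy x y) y)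
    (hflip : ∀ (x x' : E₁) (y y' : E₂),
      ‖fx x y - fx x' y'‖ ^ 2 + ‖fy x y - fy x' y'‖ ^ 2 ≤
        L_f1 ^ 2 * (‖x - x'‖ ^ 2 + ‖y - y'‖ ^ 2))
    (J : E₁ → E₂ → (E₂ →L[ℝ] E₁))
    (hJbd : ∀ (x : E₁) (y : E₂), ‖J x y‖ ≤ L_g1)
    (hJlip : ∀ (x x' : E₁) (y y' : E₂),
      ‖J x y - J x' y'‖ ^ 2 ≤ L_g2 ^ 2 * (‖x - x'‖ ^ 2 + ‖y - y'‖ ^ 2))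
    (x : E₁) (ystar ytil : E₂) (vstar vtil : E₂)
    (hvstar : ‖vstar‖ ≤ L_f0 / μ_g) :
    ‖(fx x ystar - J x ystar vstar) - (fx x ytil - J x ytil vtil)‖ ^ 2 ≤
      (2 * L_f1 ^ 2 + 4 * L_f0 ^ 2 * L_g2 ^ 2 / μ_g ^ 2) * ‖ytil - ystar‖ ^ 2 +
      4 * L_g1 ^ 2 * ‖vtil - vstar‖ ^ 2 := by
  set a := fx x ystar - fx x ytil with ha
  set b := (J x ytil - J x ystar) vstar with hb
  set c := (J x ytil) (vtil - vstar) with hc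
  have hD : (fx x ystar - J x ystar vstar) - (fx x ytil - J x ytil vtil) = a + b + c := by
    simp only [ha, hb, hc, map_sub, ContinuousLinearMap.sub_apply]
    abel
  rw [hD]
  have hna : 0 ≤ ‖a‖ := norm_nonneg a
  have hnb : 0 ≤ ‖b‖ := norm_nonneg b
  have hnc : 0 ≤ ‖c‖ := norm_nonneg c
  have ha2 : ‖a‖ ^ 2 ≤ L_f1 ^ 2 * ‖ytil - ystar‖ ^ 2 := by
    have := hflip x x ystar ytil
    simp only [sub_self, norm_zero, norm_sub_rev ystar ytil] at this
    nlinarith [sq_nonneg ‖fy x ystar - fy x ytil‖]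
  have hb2 : ‖b‖ ^ 2 ≤ L_g2 ^ 2 * ‖ytil - ystar‖ ^ 2 * (L_f0 / μ_g) ^ 2 := by
    have h1 : ‖b‖ ≤ ‖J x ytil - J x ystar‖ * ‖vstar‖ :=
      (J x ytil - J x ystar).le_opNorm vstar
    have h2 : ‖J x ytil - J x ystar‖ ^ 2 ≤ L_g2 ^ 2 * ‖ytil - ystar‖ ^ 2 := by
      have := hJlip x x ytil ystar
      simpa using this
    have hv0 : 0 ≤ L_f0 / μ_g := le_of_lt (div_pos hLf0 hμ)
    have h3 : ‖vstar‖ ^ 2 ≤ (L_f0 / μ_g) ^ 2 := by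
      nlinarith [norm_nonneg vstar]
    nlinarith [norm_nonneg (J x ytil - J x ystar), norm_nonneg vstar,
      mul_nonneg (norm_nonneg (J x ytil - J x ystar)) (norm_nonneg vstar)]
  have hc2 : ‖c‖ ^ 2 ≤ L_g1 ^ 2 * ‖vtil - vstar‖ ^ 2 := by
    have h1 : ‖c‖ ≤ ‖J x ytil‖ * ‖vtil - vstar‖ := (J x ytil).le_opNorm _
    have h3 : ‖c‖ ≤ L_g1 * ‖vtil - vstar‖ :=
      h1.trans (mul_le_mul_of_nonneg_right (hJbd x ytil) (norm_nonneg _))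
    nlinarith [mul_nonneg hLg1.le (norm_nonneg (vtil - vstar))]
  have htri : ‖a + b + c‖ ≤ ‖a‖ + ‖b‖ + ‖c‖ := norm_add₃_le
  calc ‖a + b + c‖ ^ 2 ≤ (‖a‖ + ‖b‖ + ‖c‖) ^ 2 :=
        pow_le_pow_left₀ (norm_nonneg _) htri 2
    _ ≤ 2 * ‖a‖ ^ 2 + 4 * ‖b‖ ^ 2 + 4 * ‖c‖ ^ 2 := by
        nlinarith [sq_nonneg (‖a‖ - ‖b‖ - ‖c‖), sq_nonneg (‖b‖ - ‖c‖)]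
    _ ≤ 2 * (L_f1 ^ 2 * ‖ytil - ystar‖ ^ 2)
        + 4 * (L_g2 ^ 2 * ‖ytil - ystar‖ ^ 2 * (L_f0 / μ_g) ^ 2)
        + 4 * (L_g1 ^ 2 * ‖vtil - vstar‖ ^ 2) := by linarith
    _ = (2 * L_f1 ^ 2 + 4 * L_f0 ^ 2 * L_g2 ^ 2 / μ_g ^ 2) * ‖ytil - ystar‖ ^ 2 +
        4 * L_g1 ^ 2 * ‖vtil - vstar‖ ^ 2 := by
        field_simp
end

section
/- Let E₁, E₂ be real finite-dimensional inner product spaces and 0 < μ_g ≤ L_{g,1}, L_{f,0}, L_{f,1}, L_{g,2} > 0, and let 0 < β ≤ 1/L_{g,1}. For t ∈ {t−1, t} suppose given maps H_{t−1}, H_t : E₁ × E₂ → (bounded linear operators E₂ → E₂) and b_{t−1}, b_t : E₁ × E₂ → E₂ such that: each H_s(z) is self-adjoint with ⟨H_s(z)v, v⟩ ≥ μ_g‖v‖² and ‖H_s(z)‖ ≤ L_{g,1}; z ↦ H_s(z) is L_{g,2}-Lipschitz and z ↦ b_s(z) is L_{f,1}-Lipschitz (on E₁ × E₂ with the ℓ²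 norm); and ‖b_s(z)‖ ≤ L_{f,0} everywhere. Suppose moreover that ‖H_{t−1}(z) − H_t(z)‖ ≤ Δ^H and ‖b_{t−1}(z) − b_t(z)‖ ≤ Δ^b for all z. Let V := {v ∈ E₂ : ‖v‖ ≤ L_{f,0}/μ_g} with metric projection P_V, let x_{t−1}, x_t ∈ E₁ and y_t, y_{t+1} ∈ E₂, set w*_{t−1} := H_{t−1}(x_{t−1}, y_t)⁻¹ b_{t−1}(x_{t−1}, y_t) and w*_t := H_t(x_t, y_{t+1})⁻¹ b_t(x_t, y_{t+1}), and let v_t ∈ V and v_{t+1} := P_V(v_t − β(H_t(x_t, y_{t+1}) v_t − b_t(x_t, y_{t+1}))). Then ‖v_{t+1} − w*_t‖² ≤ (1 − βμ_g/2)‖v_t − w*_{t−1}‖² + (4L_{f,1}²/μ_g² + 4L_{f,0}²L_{g,2}²/μ_g⁴)(1 − βμ_g)(1 + 2/(βμ_g))(‖x_{t−1} − x_t‖² + ‖y_t − y_{t+1}‖²) + (4L_{f,0}²/μ_g⁴)(1 − βμ_g)(1 + 2/(βμ_g))(Δ^H)² + (4/μ_g²)(1 − βμ_g)(1 + 2/(βμ_g))(Δ^b)².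 -/
/-!
The projection onto the ball `V` is nonexpansive towards `w*_t ∈ V`, and for a self-adjoint
`H` with `μ ≤ H ≤ L` and `β ≤ 1/L` the gradient map `u ↦ u - β H u` shrinks squared norms by
the factor `1 - βμ` (co-coercivity `‖H u‖² ≤ L ⟪H u, u⟫`). Hence
`‖v_{t+1} - w*_t‖² ≤ (1 - βμ) ‖v_t - w*_t‖²`. Young's inequality with weight `βμ/2` splits
`‖v_t - w*_t‖²` into `‖v_t - w*_{t-1}‖²` and the drift `‖w*_{t-1} - w*_t‖²`, and coercivity
bounds the drift by `μ⁻¹ (‖H_{t-1} - H_t‖ ‖w*_{t-1}‖ + ‖b_{t-1} - b_t‖)`, which the Lipschitz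
and temporal-variation bounds control.
-/

open scoped RealInnerProductSpace

theorem add_add_add_sq_le (a b c d : ℝ) :
    (a + b + c + d) ^ 2 ≤ 4 * (a ^ 2 + b ^ 2 + c ^ 2 + d ^ 2) := by
  nlinarith [sq_nonneg (a - b), sq_nonneg (a - c), sq_nonneg (a - d),
    sq_nonneg (b - c), sq_nonneg (b - d), sq_nonneg (c - d)]

theorem norm_add_sq_le_of_pos {E : Type*} [SeminormedAddCommGroup E] {ε : ℝ} (hε : 0 < ε)
    (x y : E) : ‖x + y‖ ^ 2 ≤ (1 + ε) * ‖x‖ ^ 2 + (1 + ε⁻¹) * ‖y‖ ^ 2 := by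
  have hyoung : 2 * ‖x‖ * ‖y‖ ≤ ε * ‖x‖ ^ 2 + ε⁻¹ * ‖y‖ ^ 2 := by
    have : 0 ≤ (ε * ‖x‖ - ‖y‖) ^ 2 * ε⁻¹ := by positivity
    have hinv : ε * ε⁻¹ = 1 := mul_inv_cancel₀ hε.ne'
    nlinarith
  calc ‖x + y‖ ^ 2 ≤ (‖x‖ + ‖y‖) ^ 2 := by gcongr; exact norm_add_le x y
    _ ≤ _ := by nlinarith

theorem Convex.norm_sub_le_of_forall_norm_sub_le {E : Type*} [NormedAddCommGroup E]
    [InnerProductSpace ℝ E] {K : Set E} (hK : Convex ℝ K) {z p u : E} (hp : p ∈ K)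
    (hmin : ∀ w ∈ K, ‖z - p‖ ≤ ‖z - w‖) (hu : u ∈ K) : ‖p - u‖ ≤ ‖z - u‖ := by
  have : Nonempty K := ⟨⟨p, hp⟩⟩
  have hinf : ‖z - p‖ = ⨅ w : K, ‖z - w‖ :=
    le_antisymm (le_ciInf fun w => hmin w w.2)
      (ciInf_le ⟨0, by rintro _ ⟨w, rfl⟩; exact norm_nonneg _⟩ (⟨p, hp⟩ : K))
  have hvar : ⟪z - p, u - p⟫ ≤ 0 := (norm_eq_iInf_iff_real_inner_le_zero hK hp).1 hinf u hu
  have hexp : ‖z - u‖ ^ 2 = ‖z - p‖ ^ 2 - 2 * ⟪z - p, u - p⟫ + ‖p - u‖ ^ 2 := by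
    rw [← sub_add_sub_cancel z p u, norm_add_sq_real, ← neg_sub u p, inner_neg_right]
    ring
  nlinarith [norm_nonneg (p - u), norm_nonneg (z - u), sq_nonneg ‖z - p‖]

namespace ContinuousLinearMap

variable {E : Type*} [NormedAddCommGroup E] [InnerProductSpace ℝ E]

theorem IsPositive.norm_apply_sq_le {T : E →L[ℝ] E} (hT : T.IsPositive) (x : E) :
    ‖T x‖ ^ 2 ≤ ‖T‖ * ⟪T x, x⟫ := by
  let B : LinearMap.BilinForm ℝ E := (innerₗ E).comp (T : E →ₗ[ℝ] E)
  have hcs := B.apply_mul_apply_le_of_forall_zero_le hT.inner_nonneg_left x (T x)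
  have hsymm : ⟪T (T x), x⟫ = ‖T x‖ ^ 2 := by
    rw [hT.inner_left_eq_inner_right, real_inner_self_eq_norm_sq]
  have hTT : ⟪T (T x), T x⟫ ≤ ‖T‖ * ‖T x‖ ^ 2 := by
    calc ⟪T (T x), T x⟫ ≤ ‖T (T x)‖ * ‖T x‖ := real_inner_le_norm _ _
      _ ≤ ‖T‖ * ‖T x‖ * ‖T x‖ := by gcongr; exact T.le_opNorm _
      _ = ‖T‖ * ‖T x‖ ^ 2 := by ring
  simp only [B, LinearMap.comp_apply, innerₗ_apply_apply, coe_coe, real_inner_self_eq_norm_sq,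
    hsymm] at hcs
  rcases (sq_nonneg ‖T x‖).eq_or_lt with h0 | hpos
  · rw [← h0]
    exact mul_nonneg (norm_nonneg T) (hT.inner_nonneg_left x)
  · nlinarith [hT.inner_nonneg_left x]

theorem IsPositive.norm_sub_smul_apply_sq_le {T : E →L[ℝ] E} (hT : T.IsPositive) {μ β : ℝ}
    (hcoer : ∀ v, μ * ‖v‖ ^ 2 ≤ ⟪T v, v⟫) (hβ : 0 ≤ β) (hβT : β * ‖T‖ ≤ 1) (u : E) :
    ‖u - β • T u‖ ^ 2 ≤ (1 - β * μ) * ‖u‖ ^ 2 := by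
  have hcoco : β * ‖T u‖ ^ 2 ≤ ⟪T u, u⟫ := by
    calc β * ‖T u‖ ^ 2 ≤ β * (‖T‖ * ⟪T u, u⟫) := by gcongr; exact hT.norm_apply_sq_le u
      _ ≤ ⟪T u, u⟫ := by nlinarith [hT.inner_nonneg_left u]
  calc ‖u - β • T u‖ ^ 2 = ‖u‖ ^ 2 - 2 * β * ⟪T u, u⟫ + β * (β * ‖T u‖ ^ 2) := by
        rw [norm_sub_sq_real, inner_smul_right, norm_smul, real_inner_comm, Real.norm_of_nonneg hβ]
        ring
    _ ≤ ‖u‖ ^ 2 - β * ⟪T u, u⟫ := by nlinarith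
    _ ≤ (1 - β * μ) * ‖u‖ ^ 2 := by nlinarith [hcoer u]

theorem mul_norm_le_norm_apply {T : E →L[ℝ] E} {μ : ℝ} (hcoer : ∀ v, μ * ‖v‖ ^ 2 ≤ ⟪T v, v⟫)
    (v : E) : μ * ‖v‖ ≤ ‖T v‖ := by
  rcases (norm_nonneg v).eq_or_lt with h0 | hpos
  · simp [← h0]
  · refine le_of_mul_le_mul_right ?_ hpos
    calc μ * ‖v‖ * ‖v‖ = μ * ‖v‖ ^ 2 := by ring
      _ ≤ ⟪T v, v⟫ := hcoer v
      _ ≤ ‖T v‖ * ‖v‖ := real_inner_le_norm _ _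

theorem mul_norm_sub_le_of_apply_eq {A₀ A₁ : E →L[ℝ] E} {μ : ℝ}
    (hcoer : ∀ v, μ * ‖v‖ ^ 2 ≤ ⟪A₁ v, v⟫) {w₀ w₁ c₀ c₁ : E} (h₀ : A₀ w₀ = c₀) (h₁ : A₁ w₁ = c₁) :
    μ * ‖w₀ - w₁‖ ≤ ‖A₀ - A₁‖ * ‖w₀‖ + ‖c₀ - c₁‖ := by
  have hdiff : A₁ (w₀ - w₁) = (A₁ - A₀) w₀ + (c₀ - c₁) := by
    rw [map_sub, h₁, sub_apply, h₀]
    abel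
  calc μ * ‖w₀ - w₁‖ ≤ ‖A₁ (w₀ - w₁)‖ := mul_norm_le_norm_apply hcoer _
    _ ≤ ‖A₁ - A₀‖ * ‖w₀‖ + ‖c₀ - c₁‖ := by
      rw [hdiff]
      exact (norm_add_le _ _).trans (by gcongr; exact le_opNorm _ _)
    _ = ‖A₀ - A₁‖ * ‖w₀‖ + ‖c₀ - c₁‖ := by rw [norm_sub_rev]

theorem norm_sub_sq_le_of_apply_eq {A₀ A₁ : E →L[ℝ] E} {μ R p q r s : ℝ} (hμ : 0 < μ)
    (hcoer : ∀ v, μ * ‖v‖ ^ 2 ≤ ⟪A₁ v, v⟫) {w₀ w₁ c₀ c₁ : E} (h₀ : A₀ w₀ = c₀) (h₁ : A₁ w₁ = c₁)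
    (hw₀ : ‖w₀‖ ≤ R) (hA : ‖A₀ - A₁‖ ≤ p + q) (hc : ‖c₀ - c₁‖ ≤ r + s) :
    ‖w₀ - w₁‖ ^ 2 ≤ 4 / μ ^ 2 * ((R * p) ^ 2 + (R * q) ^ 2 + r ^ 2 + s ^ 2) := by
  have hlin : ‖w₀ - w₁‖ ≤ (R * p + R * q + r + s) / μ := by
    rw [le_div_iff₀' hμ]
    calc μ * ‖w₀ - w₁‖ ≤ ‖A₀ - A₁‖ * ‖w₀‖ + ‖c₀ - c₁‖ := mul_norm_sub_le_of_apply_eq hcoer h₀ h₁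
      _ ≤ (p + q) * R + (r + s) := by
        gcongr
        · exact (norm_nonneg _).trans hA
      _ = R * p + R * q + r + s := by ring
  calc ‖w₀ - w₁‖ ^ 2 ≤ ((R * p + R * q + r + s) / μ) ^ 2 := by gcongr
    _ = (R * p + R * q + r + s) ^ 2 / μ ^ 2 := div_pow _ _ _
    _ ≤ 4 * ((R * p) ^ 2 + (R * q) ^ 2 + r ^ 2 + s ^ 2) / μ ^ 2 := by
      gcongr; exact add_add_add_sq_le _ _ _ _
    _ = _ := by ring

theorem IsPositive.norm_projGradStep_sub_sq_le {K : Set E} (hK : Convex ℝ K) {P : E → E}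
    (hP : ∀ z, P z ∈ K ∧ ∀ u ∈ K, ‖z - P z‖ ≤ ‖z - u‖) {T : E →L[ℝ] E} (hT : T.IsPositive)
    {μ β : ℝ} (hcoer : ∀ v, μ * ‖v‖ ^ 2 ≤ ⟪T v, v⟫) (hβ : 0 ≤ β) (hβT : β * ‖T‖ ≤ 1)
    {c w : E} (hw : w ∈ K) (hTw : T w = c) (v : E) :
    ‖P (v - β • (T v - c)) - w‖ ^ 2 ≤ (1 - β * μ) * ‖v - w‖ ^ 2 :=
  calc ‖P (v - β • (T v - c)) - w‖ ^ 2 ≤ ‖v - β • (T v - c) - w‖ ^ 2 := by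
        gcongr
        exact hK.norm_sub_le_of_forall_norm_sub_le (hP _).1 (hP _).2 hw
    _ = ‖(v - w) - β • T (v - w)‖ ^ 2 := by
        rw [map_sub, hTw]
        congr 2
        module
    _ ≤ (1 - β * μ) * ‖v - w‖ ^ 2 := hT.norm_sub_smul_apply_sq_le hcoer hβ hβT _

end ContinuousLinearMap

theorem single_loop_v_tracking_general {E₁ E₂ : Type*}
    [NormedAddCommGroup E₁] [InnerProductSpace ℝ E₁]
    [NormedAddCommGroup E₂] [InnerProductSpace ℝ E₂]
    (μ_g L_g1 L_f0 L_f1 L_g2 : ℝ)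
    (hμ : 0 < μ_g) (hμL : μ_g ≤ L_g1)
    (β : ℝ) (hβ : 0 < β) (hβ' : β ≤ 1 / L_g1)
    (H : Fin 2 → E₁ → E₂ → (E₂ →L[ℝ] E₂)) (b : Fin 2 → E₁ → E₂ → E₂)
    (hHsa : ∀ (s : Fin 2) (x : E₁) (y : E₂) (v w : E₂), ⟪H s x y v, w⟫ = ⟪v, H s x y w⟫)
    (hHcoer : ∀ (s : Fin 2) (x : E₁) (y : E₂) (v : E₂), μ_g * ‖v‖ ^ 2 ≤ ⟪H s x y v, v⟫)
    (hHbd : ∀ (s : Fin 2) (x : E₁) (y : E₂), ‖H s x y‖ ≤ L_g1)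
    (hHlip : ∀ (s : Fin 2) (x x' : E₁) (y y' : E₂),
      ‖H s x y - H s x' y'‖ ^ 2 ≤ L_g2 ^ 2 * (‖x - x'‖ ^ 2 + ‖y - y'‖ ^ 2))
    (hblip : ∀ (s : Fin 2) (x x' : E₁) (y y' : E₂),
      ‖b s x y - b s x' y'‖ ^ 2 ≤ L_f1 ^ 2 * (‖x - x'‖ ^ 2 + ‖y - y'‖ ^ 2))
    (hbbd : ∀ (s : Fin 2) (x : E₁) (y : E₂), ‖b s x y‖ ≤ L_f0)
    (ΔH Δb : ℝ)
    (hΔH : ∀ (x : E₁) (y : E₂), ‖H 0 x y - H 1 x y‖ ≤ ΔH)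
    (hΔb : ∀ (x : E₁) (y : E₂), ‖b 0 x y - b 1 x y‖ ≤ Δb)
    (projV : E₂ → E₂)
    (hprojV : ∀ z : E₂, ‖projV z‖ ≤ L_f0 / μ_g ∧
      ∀ u : E₂, ‖u‖ ≤ L_f0 / μ_g → ‖z - projV z‖ ≤ ‖z - u‖)
    (xprev xcur : E₁) (ycur ynext : E₂)
    (wprev wcur : E₂)
    (hwprev : H 0 xprev ycur wprev = b 0 xprev ycur)
    (hwcur : H 1 xcur ynext wcur = b 1 xcur ynext)
    (vt : E₂) :
    ‖projV (vt - β • (H 1 xcur ynext vt - b 1 xcur ynext)) - wcur‖ ^ 2 ≤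
      (1 - β * μ_g / 2) * ‖vt - wprev‖ ^ 2 +
      (4 * L_f1 ^ 2 / μ_g ^ 2 + 4 * L_f0 ^ 2 * L_g2 ^ 2 / μ_g ^ 4) *
        (1 - β * μ_g) * (1 + 2 / (β * μ_g)) *
        (‖xprev - xcur‖ ^ 2 + ‖ycur - ynext‖ ^ 2) +
      (4 * L_f0 ^ 2 / μ_g ^ 4) * (1 - β * μ_g) * (1 + 2 / (β * μ_g)) * ΔH ^ 2 +
      (4 / μ_g ^ 2) * (1 - β * μ_g) * (1 + 2 / (β * μ_g)) * Δb ^ 2 := by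
  set R := L_f0 / μ_g
  set S := ‖xprev - xcur‖ ^ 2 + ‖ycur - ynext‖ ^ 2
  have hsol : ∀ s x y w, H s x y w = b s x y → ‖w‖ ≤ R := fun s x y w hw => (le_div_iff₀' hμ).2
    ((ContinuousLinearMap.mul_norm_le_norm_apply (hHcoer s x y) w).trans (hw ▸ hbbd s x y))
  have hβL : β * L_g1 ≤ 1 := (le_div_iff₀ (hμ.trans_le hμL)).1 hβ'
  have hβμ : 0 < β * μ_g ∧ β * μ_g ≤ 1 :=
    ⟨mul_pos hβ hμ, (mul_le_mul_of_nonneg_left hμL hβ.le).trans hβL⟩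
  have hstep := ContinuousLinearMap.IsPositive.norm_projGradStep_sub_sq_le
    (convex_closedBall (0 : E₂) R) (P := projV)
    (fun z => ⟨mem_closedBall_zero_iff.2 (hprojV z).1,
      fun u hu => (hprojV z).2 u (mem_closedBall_zero_iff.1 hu)⟩)
    ((H 1 xcur ynext).isPositive_iff.2
      ⟨hHsa 1 xcur ynext, fun v => by nlinarith [hHcoer 1 xcur ynext v, sq_nonneg ‖v‖]⟩)
    (hHcoer 1 xcur ynext) hβ.le ((mul_le_mul_of_nonneg_left (hHbd 1 xcur ynext) hβ.le).trans hβL)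
    (mem_closedBall_zero_iff.2 (hsol 1 xcur ynext wcur hwcur)) hwcur vt
  have hdrift : ‖wprev - wcur‖ ^ 2 ≤
      4 / μ_g ^ 2 * (R ^ 2 * (L_g2 ^ 2 * S) + (R * ΔH) ^ 2 + L_f1 ^ 2 * S + Δb ^ 2) := by
    refine (ContinuousLinearMap.norm_sub_sq_le_of_apply_eq hμ (hHcoer 1 xcur ynext) hwprev hwcur
      (hsol 0 xprev ycur wprev hwprev)
      ((norm_sub_le_norm_sub_add_norm_sub _ (H 0 xcur ynext) _).trans
        (add_le_add le_rfl (hΔH xcur ynext)))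
      ((norm_sub_le_norm_sub_add_norm_sub _ (b 0 xcur ynext) _).trans
        (add_le_add le_rfl (hΔb xcur ynext)))).trans ?_
    rw [mul_pow]
    gcongr
    exacts [hHlip 0 xprev xcur ycur ynext, hblip 0 xprev xcur ycur ynext]
  have hsplit := norm_add_sq_le_of_pos (half_pos hβμ.1) (vt - wprev) (wprev - wcur)
  rw [sub_add_sub_cancel, inv_div] at hsplit
  have hcontract : (1 - β * μ_g) * (1 + β * μ_g / 2) ≤ 1 - β * μ_g / 2 := by nlinarith
  calc _ ≤ (1 - β * μ_g) * ‖vt - wcur‖ ^ 2 := hstep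
    _ ≤ (1 - β * μ_g) * ((1 + β * μ_g / 2) * ‖vt - wprev‖ ^ 2 + (1 + 2 / (β * μ_g)) *
          (4 / μ_g ^ 2 * (R ^ 2 * (L_g2 ^ 2 * S) + (R * ΔH) ^ 2 + L_f1 ^ 2 * S + Δb ^ 2))) :=
      mul_le_mul_of_nonneg_left (hsplit.trans (by gcongr)) (by linarith)
    _ ≤ _ := by linear_combination ‖vt - wprev‖ ^ 2 * hcontract

/-- Single-loop linear-system tracking recursion (Lemma 3.2): one projected gradient
step for the quadratic `Φ_t(x,y,v) = ½⟪H_t(x,y)v,v⟫ − ⟪b_t(x,y),v⟫` over the ball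
`V = {‖v‖ ≤ L_{f,0}/μ_g}` tracks the drifting solution `w*_t = H_t⁻¹ b_t`.
The index `0` plays the role of time `t−1` and `1` that of time `t`; Lipschitzness with
respect to the ℓ² norm on `E₁ × E₂` is expressed by squared component inequalities. -/
theorem single_loop_v_tracking {E₁ E₂ : Type*}
    [NormedAddCommGroup E₁] [InnerProductSpace ℝ E₁] [FiniteDimensional ℝ E₁]
    [NormedAddCommGroup E₂] [InnerProductSpace ℝ E₂] [FiniteDimensional ℝ E₂]
    (μ_g L_g1 L_f0 L_f1 L_g2 : ℝ)
    (hμ : 0 < μ_g) (hμL : μ_g ≤ L_g1) (hLf0 : 0 < L_f0) (hLf1 : 0 < L_f1) (hLg2 : 0 < L_g2)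
    (β : ℝ) (hβ : 0 < β) (hβ' : β ≤ 1 / L_g1)
    (H : Fin 2 → E₁ → E₂ → (E₂ →L[ℝ] E₂)) (b : Fin 2 → E₁ → E₂ → E₂)
    (hHsa : ∀ (s : Fin 2) (x : E₁) (y : E₂) (v w : E₂), ⟪H s x y v, w⟫ = ⟪v, H s x y w⟫)
    (hHcoer : ∀ (s : Fin 2) (x : E₁) (y : E₂) (v : E₂), μ_g * ‖v‖ ^ 2 ≤ ⟪H s x y v, v⟫)
    (hHbd : ∀ (s : Fin 2) (x : E₁) (y : E₂), ‖H s x y‖ ≤ L_g1)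
    (hHlip : ∀ (s : Fin 2) (x x' : E₁) (y y' : E₂),
      ‖H s x y - H s x' y'‖ ^ 2 ≤ L_g2 ^ 2 * (‖x - x'‖ ^ 2 + ‖y - y'‖ ^ 2))
    (hblip : ∀ (s : Fin 2) (x x' : E₁) (y y' : E₂),
      ‖b s x y - b s x' y'‖ ^ 2 ≤ L_f1 ^ 2 * (‖x - x'‖ ^ 2 + ‖y - y'‖ ^ 2))
    (hbbd : ∀ (s : Fin 2) (x : E₁) (y : E₂), ‖b s x y‖ ≤ L_f0)
    (ΔH Δb : ℝ)
    (hΔH : ∀ (x : E₁) (y : E₂), ‖H 0 x y - H 1 x y‖ ≤ ΔH)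
    (hΔb : ∀ (x : E₁) (y : E₂), ‖b 0 x y - b 1 x y‖ ≤ Δb)
    (projV : E₂ → E₂)
    (hprojV : ∀ z : E₂, ‖projV z‖ ≤ L_f0 / μ_g ∧
      ∀ u : E₂, ‖u‖ ≤ L_f0 / μ_g → ‖z - projV z‖ ≤ ‖z - u‖)
    (xprev xcur : E₁) (ycur ynext : E₂)
    (wprev wcur : E₂)
    (hwprev : H 0 xprev ycur wprev = b 0 xprev ycur)
    (hwcur : H 1 xcur ynext wcur = b 1 xcur ynext)
    (vt : E₂) (hvt : ‖vt‖ ≤ L_f0 / μ_g) :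
    ‖projV (vt - β • (H 1 xcur ynext vt - b 1 xcur ynext)) - wcur‖ ^ 2 ≤
      (1 - β * μ_g / 2) * ‖vt - wprev‖ ^ 2 +
      (4 * L_f1 ^ 2 / μ_g ^ 2 + 4 * L_f0 ^ 2 * L_g2 ^ 2 / μ_g ^ 4) *
        (1 - β * μ_g) * (1 + 2 / (β * μ_g)) *
        (‖xprev - xcur‖ ^ 2 + ‖ycur - ynext‖ ^ 2) +
      (4 * L_f0 ^ 2 / μ_g ^ 4) * (1 - β * μ_g) * (1 + 2 / (β * μ_g)) * ΔH ^ 2 +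
      (4 / μ_g ^ 2) * (1 - β * μ_g) * (1 + 2 / (β * μ_g)) * Δb ^ 2 :=
  single_loop_v_tracking_general μ_g L_g1 L_f0 L_f1 L_g2 hμ hμL β hβ hβ' H b hHsa hHcoer hHbd hHlip
    hblip hbbd ΔH Δb hΔH hΔb projV hprojV xprev xcur ycur ynext wprev wcur hwprev hwcur vt
end

section
/- Let E, E' be real finite-dimensional inner product spaces and μ, L_{f,0}, L_{f,1}, L_{g,2} > 0. Let H : E' → (bounded linear operators E → E) and b : E' → E be maps such that for every z ∈ E': H(z) is self-adjoint with ⟨H(z)v, v⟩ ≥ μ‖v‖² for all v; ‖b(z)‖ ≤ L_{f,0}; and z ↦ H(z) is L_{g,2}-Lipschitz while z ↦ b(z) is L_{f,1}-Lipschitz. Then each H(z) is invertible, and for all z, z' ∈ E': ‖H(z)⁻¹ b(z) − H(z')⁻¹ b(z')‖ ≤ (L_{f,1}/μ + L_{f,0}L_{g,2}/μ²)·‖z − z'‖. In particular the map z ↦ H(z)⁻¹ b(z) is Lipschitz with constant L_v := L_{f,1}/μ + L_{f,0}L_{g,2}/μ². -/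
open scoped RealInnerProductSpace

/-- Lipschitz sensitivity of the linear-system solution `v*(z) = H(z)⁻¹ b(z)`:
each `H(z)` is invertible, and any solutions `v, v'` of `H(z)v = b(z)`, `H(z')v' = b(z')`
satisfy `‖v − v'‖ ≤ (L_{f,1}/μ + L_{f,0}L_{g,2}/μ²)·‖z − z'‖`. -/
theorem vstar_lipschitz {E E' : Type*}
    [NormedAddCommGroup E] [InnerProductSpace ℝ E] [FiniteDimensional ℝ E]
    [NormedAddCommGroup E'] [InnerProductSpace ℝ E'] [FiniteDimensional ℝ E']
    (μ L_f0 L_f1 L_g2 : ℝ)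
    (hμ : 0 < μ) (hLf0 : 0 < L_f0) (hLf1 : 0 < L_f1) (hLg2 : 0 < L_g2)
    (H : E' → (E →L[ℝ] E)) (b : E' → E)
    (hHsa : ∀ (z : E') (v w : E), ⟪H z v, w⟫ = ⟪v, H z w⟫)
    (hHcoer : ∀ (z : E') (v : E), μ * ‖v‖ ^ 2 ≤ ⟪H z v, v⟫)
    (hb : ∀ z : E', ‖b z‖ ≤ L_f0)
    (hHlip : ∀ z z' : E', ‖H z - H z'‖ ≤ L_g2 * ‖z - z'‖)
    (hblip : ∀ z z' : E', ‖b z - b z'‖ ≤ L_f1 * ‖z - z'‖) :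
    (∀ z : E', Function.Bijective (H z)) ∧
    (∀ (z z' : E') (v v' : E), H z v = b z → H z' v' = b z' →
      ‖v - v'‖ ≤ (L_f1 / μ + L_f0 * L_g2 / μ ^ 2) * ‖z - z'‖) := by
  -- key lower bound: μ‖v‖ ≤ ‖H z v‖
  have key : ∀ (z : E') (v : E), μ * ‖v‖ ≤ ‖H z v‖ := by
    intro z v
    rcases eq_or_ne v 0 with rfl | hv
    · simp
    · have h1 : μ * ‖v‖ ^ 2 ≤ ⟪H z v, v⟫ := hHcoer z v
      have h2 : ⟪H z v, v⟫ ≤ ‖H z v‖ * ‖v‖ := real_inner_le_norm _ _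
      have hvpos : 0 < ‖v‖ := norm_pos_iff.mpr hv
      nlinarith
  have hinj : ∀ z : E', Function.Injective (H z) := by
    intro z u w h
    have : μ * ‖u - w‖ ≤ ‖H z (u - w)‖ := key z _
    rw [map_sub, h, sub_self, norm_zero] at this
    have : ‖u - w‖ ≤ 0 := by nlinarith [norm_nonneg (u - w)]
    have := le_antisymm this (norm_nonneg _)
    exact sub_eq_zero.mp (norm_eq_zero.mp this)
  constructor
  · intro z
    exact ⟨hinj z, (LinearMap.injective_iff_surjective (f := (H z : E →ₗ[ℝ] E))).mp (hinj z)⟩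
  · intro z z' v v' hv hv'
    -- bound on ‖v'‖
    have hv'bound : ‖v'‖ ≤ L_f0 / μ := by
      have h1 : μ * ‖v'‖ ≤ ‖H z' v'‖ := key z' v'
      rw [hv'] at h1
      have := hb z'
      rw [le_div_iff₀ hμ]; linarith
    -- H z (v - v') = (b z - b z') + (H z' - H z) v'
    have hexp : H z (v - v') = (b z - b z') + (H z' - H z) v' := by
      simp only [map_sub, ContinuousLinearMap.sub_apply, hv, hv']
      abel
    have h1 : μ * ‖v - v'‖ ≤ ‖H z (v - v')‖ := key z _
    have h2 : ‖H z (v - v')‖ ≤ L_f1 * ‖z - z'‖ + L_g2 * ‖z - z'‖ * (L_f0 / μ) := by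
      rw [hexp]
      calc ‖(b z - b z') + (H z' - H z) v'‖
          ≤ ‖b z - b z'‖ + ‖(H z' - H z) v'‖ := norm_add_le _ _
        _ ≤ L_f1 * ‖z - z'‖ + ‖H z' - H z‖ * ‖v'‖ := by
            gcongr
            · exact hblip z z'
            · exact (H z' - H z).le_opNorm v'
        _ ≤ L_f1 * ‖z - z'‖ + L_g2 * ‖z - z'‖ * (L_f0 / μ) := by
            have hH : ‖H z' - H z‖ ≤ L_g2 * ‖z - z'‖ := by
              have := hHlip z' z
              rwa [show z' - z = -(z - z') by abel, norm_neg] at this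
            have : ‖H z' - H z‖ * ‖v'‖ ≤ (L_g2 * ‖z - z'‖) * (L_f0 / μ) :=
              mul_le_mul hH hv'bound (norm_nonneg _) (by positivity)
            linarith
    have hzz : (0:ℝ) ≤ ‖z - z'‖ := norm_nonneg _
    have goal : μ * ‖v - v'‖ ≤ μ * ((L_f1 / μ + L_f0 * L_g2 / μ ^ 2) * ‖z - z'‖) := by
      have : μ * ((L_f1 / μ + L_f0 * L_g2 / μ ^ 2) * ‖z - z'‖)
          = L_f1 * ‖z - z'‖ + L_g2 * ‖z - z'‖ * (L_f0 / μ) := by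
        field_simp
      rw [this]; linarith
    exact le_of_mul_le_mul_left goal hμ
end

section
/- Let E be a real finite-dimensional inner product space and 0 < μ ≤ L_{g,1}, L_{f,0}, L_{f,1}, L_{g,2} > 0. Let H, H' be self-adjoint linear maps on E with ⟨Hv,v⟩ ≥ μ‖v‖², ⟨H'v,v⟩ ≥ μ‖v‖² for all v, and ‖H‖ ≤ L_{g,1}. Let b, b' ∈ E with ‖b‖ ≤ L_{f,0} and ‖b'‖ ≤ L_{f,0}, and let r ≥ 0 satisfy ‖b − b'‖ ≤ L_{f,1}·r and ‖H − H'‖ ≤ L_{g,2}·r. Let V := {v ∈ E : ‖v‖ ≤ L_{f,0}/μ} with metric projection P_V, fix 0 < β ≤ 1/L_{g,1} and M ∈ ℕ, take any v⁰ ∈ V, and define v^{m+1} := P_V(v^m − β(H v^m − b)) for m = 0,…,M−1. Then ‖v^M − H'⁻¹ b'‖² ≤ (32 L_{f,0}²/μ²)(1 − βμ)^M + (4L_{f,1}²/μ² + 4L_{f,0}²L_{g,2}²/μ⁴)·r². -/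
open scoped RealInnerProductSpace

set_option maxHeartbeats 1000000 in
/-- Projected gradient descent on the strongly convex quadratic
`Φ(v) = ½⟪Hv,v⟫ − ⟪b,v⟫` over the ball `V = {‖v‖ ≤ L_{f,0}/μ}` tracks the solution
`H'⁻¹b'` of a perturbed system:
`‖v^M − H'⁻¹b'‖² ≤ (32L_{f,0}²/μ²)(1 − βμ)^M + (4L_{f,1}²/μ² + 4L_{f,0}²L_{g,2}²/μ⁴)r²`. -/
theorem projected_gd_linear_system_error {E : Type*}
    [NormedAddCommGroup E] [InnerProductSpace ℝ E] [FiniteDimensional ℝ E]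
    (μ L_g1 L_f0 L_f1 L_g2 : ℝ)
    (hμ : 0 < μ) (hμL : μ ≤ L_g1) (hLf0 : 0 < L_f0) (hLf1 : 0 < L_f1) (hLg2 : 0 < L_g2)
    (H H' : E →L[ℝ] E)
    (hHsa : ∀ v w : E, ⟪H v, w⟫ = ⟪v, H w⟫)
    (hH'sa : ∀ v w : E, ⟪H' v, w⟫ = ⟪v, H' w⟫)
    (hHcoer : ∀ v : E, μ * ‖v‖ ^ 2 ≤ ⟪H v, v⟫)
    (hH'coer : ∀ v : E, μ * ‖v‖ ^ 2 ≤ ⟪H' v, v⟫)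
    (hHbd : ‖H‖ ≤ L_g1)
    (b b' : E) (hb : ‖b‖ ≤ L_f0) (hb' : ‖b'‖ ≤ L_f0)
    (r : ℝ) (hr : 0 ≤ r)
    (hbb : ‖b - b'‖ ≤ L_f1 * r) (hHH : ‖H - H'‖ ≤ L_g2 * r)
    (projV : E → E)
    (hprojV : ∀ z : E, ‖projV z‖ ≤ L_f0 / μ ∧
      ∀ u : E, ‖u‖ ≤ L_f0 / μ → ‖z - projV z‖ ≤ ‖z - u‖)
    (β : ℝ) (hβ : 0 < β) (hβ' : β ≤ 1 / L_g1) (M : ℕ)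
    (v : ℕ → E) (hv0 : ‖v 0‖ ≤ L_f0 / μ)
    (hstep : ∀ m < M, v (m + 1) = projV (v m - β • (H (v m) - b)))
    (wstar : E) (hwstar : H' wstar = b') :
    ‖v M - wstar‖ ^ 2 ≤
      (32 * L_f0 ^ 2 / μ ^ 2) * (1 - β * μ) ^ M +
      (4 * L_f1 ^ 2 / μ ^ 2 + 4 * L_f0 ^ 2 * L_g2 ^ 2 / μ ^ 4) * r ^ 2 := by
  have hL : 0 < L_g1 := lt_of_lt_of_le hμ hμL
  have hβL : β * L_g1 ≤ 1 := by
    have := (le_div_iff₀ hL).mp hβ'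
    linarith
  have hβμ : β * μ ≤ 1 := le_trans (by nlinarith) hβL
  -- H is injective hence surjective
  have hinj : Function.Injective H := by
    intro x y hxy
    have h1 : μ * ‖x - y‖ ^ 2 ≤ ⟪H (x - y), x - y⟫ := hHcoer _
    rw [map_sub, hxy, sub_self, inner_zero_left] at h1
    have hne : ‖x - y‖ = 0 := by
      by_contra h
      have hpos : 0 < ‖x - y‖ := (norm_nonneg _).lt_of_ne (Ne.symm h)
      nlinarith [mul_pos hμ (mul_pos hpos hpos)]
    rwa [norm_eq_zero, sub_eq_zero] at hne
  have hsurj : Function.Surjective H := by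
    have := (LinearMap.injective_iff_surjective (f := (H : E →ₗ[ℝ] E))).mp hinj
    exact this
  obtain ⟨vstar, hvstar⟩ := hsurj b
  -- norm bounds on vstar and wstar
  have hnorm_sol : ∀ (A : E →L[ℝ] E) (c x : E), (∀ u : E, μ * ‖u‖ ^ 2 ≤ ⟪A u, u⟫) →
      ‖c‖ ≤ L_f0 → A x = c → ‖x‖ ≤ L_f0 / μ := by
    intro A c x hco hc hx
    have h1 : μ * ‖x‖ ^ 2 ≤ ⟪A x, x⟫ := hco x
    have h2 : ⟪A x, x⟫ ≤ ‖c‖ * ‖x‖ := by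
      rw [hx]; exact real_inner_le_norm c x
    have h3 : μ * ‖x‖ ^ 2 ≤ L_f0 * ‖x‖ := by
      nlinarith [norm_nonneg x]
    rw [le_div_iff₀ hμ]
    nlinarith [norm_nonneg x]
  have hvstar_bd : ‖vstar‖ ≤ L_f0 / μ := hnorm_sol H b vstar hHcoer hb hvstar
  have hwstar_bd : ‖wstar‖ ≤ L_f0 / μ := hnorm_sol H' b' wstar hH'coer hb' hwstar
  -- projection is nonexpansive toward points of the ball
  have hproj_ne : ∀ z u : E, ‖u‖ ≤ L_f0 / μ → ‖projV z - u‖ ≤ ‖z - u‖ := by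
    intro z u hu
    obtain ⟨hp1, hp2⟩ := hprojV z
    set p := projV z with hp
    have hvar : ⟪z - p, u - p⟫ ≤ 0 := by
      by_contra hc
      push_neg at hc
      set c := ⟪z - p, u - p⟫ with hcdef
      have hup : u - p ≠ 0 := by
        intro h
        rw [hcdef, h, inner_zero_right] at hc
        exact lt_irrefl 0 hc
      have hK : 0 < ‖u - p‖ ^ 2 := pow_pos (norm_pos_iff.mpr hup) 2
      set K := ‖u - p‖ ^ 2 with hKdef
      set t : ℝ := min 1 (c / K) with ht
      have ht0 : 0 < t := lt_min one_pos (div_pos hc hK)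
      have ht1 : t ≤ 1 := min_le_left _ _
      have htK : t * K ≤ c := by
        rcases le_total (c / K) 1 with h1 | h1
        · have ht' : t = c / K := min_eq_right h1
          rw [ht']
          exact le_of_eq (div_mul_cancel₀ c (ne_of_gt hK))
        · have ht' : t = 1 := min_eq_left h1
          have h2 : K ≤ c := (one_le_div hK).mp h1
          rw [ht']; linarith
      have hmem : ‖p + t • (u - p)‖ ≤ L_f0 / μ := by
        have : p + t • (u - p) = (1 - t) • p + t • u := by
          module
        rw [this]
        calc ‖(1 - t) • p + t • u‖ ≤ ‖(1 - t) • p‖ + ‖t • u‖ := norm_add_le _ _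
          _ = (1 - t) * ‖p‖ + t * ‖u‖ := by
              rw [norm_smul, norm_smul, Real.norm_eq_abs, Real.norm_eq_abs,
                abs_of_nonneg (by linarith), abs_of_nonneg (by linarith)]
          _ ≤ (1 - t) * (L_f0 / μ) + t * (L_f0 / μ) := by
              have h0 : 0 ≤ 1 - t := by linarith
              gcongr
          _ = L_f0 / μ := by ring
      have hle : ‖z - p‖ ≤ ‖z - (p + t • (u - p))‖ := hp2 _ hmem
      have hexp : ‖z - (p + t • (u - p))‖ ^ 2
          = ‖z - p‖ ^ 2 - 2 * t * c + t ^ 2 * K := by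
        have h1 : z - (p + t • (u - p)) = (z - p) - t • (u - p) := by abel
        rw [h1, @norm_sub_sq_real, real_inner_smul_right, norm_smul,
          Real.norm_eq_abs, abs_of_nonneg ht0.le, hcdef, hKdef]
        ring
      have hle2 : ‖z - p‖ ^ 2 ≤ ‖z - p‖ ^ 2 - 2 * t * c + t ^ 2 * K := by
        have := pow_le_pow_left₀ (norm_nonneg (z - p)) hle 2
        rw [hexp] at this
        exact this
      nlinarith [mul_le_mul_of_nonneg_left htK ht0.le, mul_pos ht0 hc]
    have : ‖z - u‖ ^ 2 = ‖z - p‖ ^ 2 + 2 * ⟪z - p, p - u⟫ + ‖p - u‖ ^ 2 := by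
      have h1 : z - u = (z - p) + (p - u) := by abel
      rw [h1]
      exact norm_add_sq_real (z - p) (p - u)
    have h2 : 0 ≤ ⟪z - p, p - u⟫ := by
      have : p - u = -(u - p) := by abel
      rw [this, inner_neg_right]; linarith
    nlinarith [norm_nonneg (p - u), norm_nonneg (z - u), sq_nonneg ‖z - p‖]
  -- Cauchy-Schwarz for the H-bilinear form
  have hcs : ∀ u w : E, ⟪H u, w⟫ ^ 2 ≤ ⟪H u, u⟫ * ⟪H w, w⟫ := by
    intro u w
    rcases eq_or_ne w 0 with h | h
    · simp [h]
    · have hq : 0 < ⟪H w, w⟫ := by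
        have := hHcoer w
        have hw : 0 < ‖w‖ := norm_pos_iff.mpr h
        nlinarith [mul_pos hμ (mul_pos hw hw)]
      have hsymm : ⟪H w, u⟫ = ⟪H u, w⟫ := by
        rw [hHsa w u, real_inner_comm]
      have h0 : 0 ≤ ⟪H (⟪H w, w⟫ • u - ⟪H u, w⟫ • w), ⟪H w, w⟫ • u - ⟪H u, w⟫ • w⟫ := by
        refine le_trans ?_ (hHcoer _)
        positivity
      simp only [map_sub, map_smul, inner_sub_left, inner_sub_right,
        real_inner_smul_left, real_inner_smul_right] at h0
      rw [hsymm] at h0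
      nlinarith [h0, hq]
  -- cocoercivity
  have hcoco : ∀ w : E, ‖H w‖ ^ 2 ≤ L_g1 * ⟪H w, w⟫ := by
    intro w
    rcases eq_or_ne (H w) 0 with h | h
    · rw [h]; simp
    · have h1 := hcs w (H w)
      have h2 : ⟪H (H w), H w⟫ ≤ L_g1 * ‖H w‖ ^ 2 := by
        calc ⟪H (H w), H w⟫ ≤ ‖H (H w)‖ * ‖H w‖ := real_inner_le_norm _ _
          _ ≤ (L_g1 * ‖H w‖) * ‖H w‖ := by
              have h2a : ‖H (H w)‖ ≤ L_g1 * ‖H w‖ :=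
                le_trans (H.le_opNorm (H w)) (mul_le_mul_of_nonneg_right hHbd (norm_nonneg _))
              exact mul_le_mul_of_nonneg_right h2a (norm_nonneg _)
          _ = L_g1 * ‖H w‖ ^ 2 := by ring
      have h3 : ⟪H w, H w⟫ = ‖H w‖ ^ 2 := real_inner_self_eq_norm_sq _
      have hpos : 0 < ‖H w‖ ^ 2 := pow_pos (norm_pos_iff.mpr h) 2
      have hHww : 0 ≤ ⟪H w, w⟫ := le_trans (by positivity) (hHcoer w)
      rw [h3] at h1
      nlinarith
  -- one-step contraction
  have hcontract : ∀ w : E, ‖w - β • H w‖ ^ 2 ≤ (1 - β * μ) * ‖w‖ ^ 2 := by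
    intro w
    have hexp : ‖w - β • H w‖ ^ 2
        = ‖w‖ ^ 2 - 2 * β * ⟪H w, w⟫ + β ^ 2 * ‖H w‖ ^ 2 := by
      rw [@norm_sub_sq_real, real_inner_smul_right, norm_smul, Real.norm_eq_abs,
        abs_of_nonneg hβ.le, real_inner_comm]
      ring
    have h1 := hcoco w
    have h2 := hHcoer w
    have hq0 : (0:ℝ) ≤ ⟪H w, w⟫ := le_trans (by positivity) (hHcoer w)
    rw [hexp]
    nlinarith [mul_le_mul_of_nonneg_left h1 (sq_nonneg β),
      mul_nonneg (mul_nonneg hβ.le (sub_nonneg.mpr hβL)) hq0,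
      mul_le_mul_of_nonneg_left h2 hβ.le]
  -- iterate
  have h1mβμ : 0 ≤ 1 - β * μ := by linarith
  have hiter : ∀ m, m ≤ M → ‖v m - vstar‖ ^ 2 ≤ (1 - β * μ) ^ m * ‖v 0 - vstar‖ ^ 2 := by
    intro m hm
    induction m with
    | zero => simp
    | succ n ih =>
      have hn : n < M := hm
      have hnM : n ≤ M := le_of_lt hn
      have hkey : v (n + 1) = projV (v n - β • (H (v n) - b)) := hstep n hn
      have h1 : ‖v (n + 1) - vstar‖ ≤ ‖(v n - β • (H (v n) - b)) - vstar‖ := by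
        rw [hkey]; exact hproj_ne _ _ hvstar_bd
      have h2 : (v n - β • (H (v n) - b)) - vstar
          = (v n - vstar) - β • H (v n - vstar) := by
        rw [map_sub, hvstar]
        module
      rw [h2] at h1
      have h3 : ‖(v n - vstar) - β • H (v n - vstar)‖ ^ 2
          ≤ (1 - β * μ) * ‖v n - vstar‖ ^ 2 := hcontract _
      have h4 := ih hnM
      calc ‖v (n + 1) - vstar‖ ^ 2 ≤ ‖(v n - vstar) - β • H (v n - vstar)‖ ^ 2 :=
            pow_le_pow_left₀ (norm_nonneg _) h1 2
        _ ≤ (1 - β * μ) * ‖v n - vstar‖ ^ 2 := h3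
        _ ≤ (1 - β * μ) * ((1 - β * μ) ^ n * ‖v 0 - vstar‖ ^ 2) := by
            exact mul_le_mul_of_nonneg_left h4 h1mβμ
        _ = (1 - β * μ) ^ (n + 1) * ‖v 0 - vstar‖ ^ 2 := by ring
  have hinit : ‖v 0 - vstar‖ ^ 2 ≤ 4 * L_f0 ^ 2 / μ ^ 2 := by
    have h1 : ‖v 0 - vstar‖ ≤ L_f0 / μ + L_f0 / μ :=
      le_trans (norm_sub_le _ _) (add_le_add hv0 hvstar_bd)
    have h2 : (0:ℝ) ≤ L_f0 / μ + L_f0 / μ := by positivity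
    have := pow_le_pow_left₀ (norm_nonneg _) h1 2
    calc ‖v 0 - vstar‖ ^ 2 ≤ (L_f0 / μ + L_f0 / μ) ^ 2 := this
      _ = 4 * L_f0 ^ 2 / μ ^ 2 := by field_simp; ring
  have hM := hiter M le_rfl
  -- perturbation bound
  have hd : ‖vstar - wstar‖ ≤ L_f1 * r / μ + L_f0 * L_g2 * r / μ ^ 2 := by
    set d := vstar - wstar with hdd
    have h1 : μ * ‖d‖ ^ 2 ≤ ⟪H d, d⟫ := hHcoer d
    have h2 : H d = (b - b') + ((H' - H) wstar) := by
      have hh : (H' - H) wstar = b' - H wstar := by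
        rw [ContinuousLinearMap.sub_apply, hwstar]
      rw [hdd, map_sub, hvstar, hh]
      abel
    have h3 : ‖H d‖ ≤ L_f1 * r + L_g2 * r * (L_f0 / μ) := by
      rw [h2]
      calc ‖(b - b') + (H' - H) wstar‖ ≤ ‖b - b'‖ + ‖(H' - H) wstar‖ := norm_add_le _ _
        _ ≤ L_f1 * r + ‖H' - H‖ * ‖wstar‖ := by
            gcongr
            exact (H' - H).le_opNorm _
        _ ≤ L_f1 * r + L_g2 * r * (L_f0 / μ) := by
            have : ‖H' - H‖ = ‖H - H'‖ := norm_sub_rev _ _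
            have hn : 0 ≤ ‖H' - H‖ := norm_nonneg _
            have hw0 : 0 ≤ ‖wstar‖ := norm_nonneg _
            nlinarith [mul_le_mul hHH hwstar_bd hw0 (by positivity : (0:ℝ) ≤ L_g2 * r)]
    have h4 : ⟪H d, d⟫ ≤ ‖H d‖ * ‖d‖ := real_inner_le_norm _ _
    have h5 : μ * ‖d‖ ^ 2 ≤ (L_f1 * r + L_g2 * r * (L_f0 / μ)) * ‖d‖ := by
      nlinarith [norm_nonneg d, norm_nonneg (H d)]
    have hμ2 : (0:ℝ) < μ ^ 2 := by positivity
    rcases eq_or_lt_of_le (norm_nonneg d) with h | h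
    · rw [← h]; positivity
    · have h6 : μ * ‖d‖ ≤ L_f1 * r + L_g2 * r * (L_f0 / μ) := by
        nlinarith [h5, h]
      have h7 : ‖d‖ ≤ (L_f1 * r + L_g2 * r * (L_f0 / μ)) / μ := by
        rw [le_div_iff₀ hμ]; linarith
      calc ‖d‖ ≤ (L_f1 * r + L_g2 * r * (L_f0 / μ)) / μ := h7
        _ = L_f1 * r / μ + L_f0 * L_g2 * r / μ ^ 2 := by
            field_simp
  -- assemble
  have hsplit : ‖v M - wstar‖ ^ 2 ≤ 2 * ‖v M - vstar‖ ^ 2 + 2 * ‖vstar - wstar‖ ^ 2 := by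
    have h1 : ‖v M - wstar‖ ≤ ‖v M - vstar‖ + ‖vstar - wstar‖ := norm_sub_le_norm_sub_add_norm_sub _ _ _
    nlinarith [norm_nonneg (v M - vstar), norm_nonneg (vstar - wstar),
      sq_nonneg (‖v M - vstar‖ - ‖vstar - wstar‖), pow_le_pow_left₀ (norm_nonneg _) h1 2]
  have hd2 : ‖vstar - wstar‖ ^ 2 ≤ 2 * (L_f1 * r / μ) ^ 2 + 2 * (L_f0 * L_g2 * r / μ ^ 2) ^ 2 := by
    have hsq := pow_le_pow_left₀ (norm_nonneg (vstar - wstar)) hd 2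
    nlinarith [hsq, sq_nonneg (L_f1 * r / μ - L_f0 * L_g2 * r / μ ^ 2)]
  have hpow : (0:ℝ) ≤ (1 - β * μ) ^ M := pow_nonneg h1mβμ M
  have hfin1 : 2 * ‖v M - vstar‖ ^ 2 ≤ 8 * L_f0 ^ 2 / μ ^ 2 * (1 - β * μ) ^ M := by
    have hstep1 : (1 - β * μ) ^ M * ‖v 0 - vstar‖ ^ 2
        ≤ (1 - β * μ) ^ M * (4 * L_f0 ^ 2 / μ ^ 2) :=
      mul_le_mul_of_nonneg_left hinit hpow
    have : (1 - β * μ) ^ M * (4 * L_f0 ^ 2 / μ ^ 2)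
        = 4 * L_f0 ^ 2 / μ ^ 2 * (1 - β * μ) ^ M := by ring
    rw [this] at hstep1
    have h8 : 8 * L_f0 ^ 2 / μ ^ 2 * (1 - β * μ) ^ M
        = 2 * (4 * L_f0 ^ 2 / μ ^ 2 * (1 - β * μ) ^ M) := by ring
    rw [h8]
    linarith
  have hfin2 : 2 * ‖vstar - wstar‖ ^ 2
      ≤ (4 * L_f1 ^ 2 / μ ^ 2 + 4 * L_f0 ^ 2 * L_g2 ^ 2 / μ ^ 4) * r ^ 2 := by
    have h3 : (4 * L_f1 ^ 2 / μ ^ 2 + 4 * L_f0 ^ 2 * L_g2 ^ 2 / μ ^ 4) * r ^ 2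
        = 4 * (L_f1 * r / μ) ^ 2 + 4 * (L_f0 * L_g2 * r / μ ^ 2) ^ 2 := by ring
    rw [h3]
    linarith
  have hfin3 : 8 * L_f0 ^ 2 / μ ^ 2 * (1 - β * μ) ^ M
      ≤ 32 * L_f0 ^ 2 / μ ^ 2 * (1 - β * μ) ^ M := by
    have h0 : 8 * L_f0 ^ 2 / μ ^ 2 ≤ 32 * L_f0 ^ 2 / μ ^ 2 := by
      have : (0:ℝ) ≤ L_f0 ^ 2 / μ ^ 2 := by positivity
      have h8 : 8 * L_f0 ^ 2 / μ ^ 2 = 8 * (L_f0 ^ 2 / μ ^ 2) := by ring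
      have h32 : 32 * L_f0 ^ 2 / μ ^ 2 = 32 * (L_f0 ^ 2 / μ ^ 2) := by ring
      rw [h8, h32]; linarith
    exact mul_le_mul_of_nonneg_right h0 hpow
  linarith
end

section
/- Let E be a real finite-dimensional inner product space and E' an arbitrary real normed space of arguments; let 0 < μ_g ≤ L_{g,1} and L_{f,0} > 0; let w ≥ 1 be an integer, η ∈ (0,1], and W := Σ_{i=0}^{w−1} η^i. For s ∈ {1,…,T}, let H_s : E' → (bounded linear operators E → E) and b_s : E' → E satisfy: each H_s(z) is self-adjoint with ⟨H_s(z)v, v⟩ ≥ μ_g‖v‖² and ‖H_s(z)‖ ≤ L_{g,1}; and ‖b_s(z)‖ ≤ L_{f,0} for all z. For t with w ≤ t ≤ T define Ĥ_{t,w}(z) := (1/W)Σ_{i=0}^{w−1} η^i H_{t−i}(z), b̂_{t,w}(z) := (1/W)Σ_{i=0}^{w−1} η^i b_{t−i}(z), and v*_{t,w}(z) := Ĥ_{t,w}(z)⁻¹ b̂_{t,w}(z). Then for every t with w + 1 ≤ t ≤ T and every z ∈ E': ‖v*_{t−1,w}(z) − v*_{t,w}(z)‖ ≤ (1 + η^w)·L_{f,0}·(L_{g,1}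 + μ_g) / (μ_g²·W). -/
open scoped RealInnerProductSpace

private lemma window_shift_aux {M : Type*} [AddCommGroup M] [Module ℝ M]
    (η : ℝ) (w t : ℕ) (f : ℕ → M) :
    ∑ i ∈ Finset.range w, η ^ i • f (t - i)
      = η • ∑ i ∈ Finset.range w, η ^ i • f (t - 1 - i)
        + f t - η ^ w • f (t - w) := by
  have h : η • ∑ i ∈ Finset.range w, η ^ i • f (t - 1 - i)
      = ∑ i ∈ Finset.range w, η ^ (i + 1) • f (t - (i + 1)) := by
    rw [Finset.smul_sum]
    refine Finset.sum_congr rfl fun i _ => ?_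
    rw [smul_smul, ← pow_succ']
    congr 2
    omega
  have h1 := Finset.sum_range_succ' (fun i => η ^ i • f (t - i)) w
  have h2 := Finset.sum_range_succ (fun i => η ^ i • f (t - i)) w
  rw [h2] at h1
  -- h1 : ∑_{i<w} g i + g w = ∑_{i<w} g (i+1) + g 0
  rw [h]
  simp only [pow_zero, one_smul, Nat.sub_zero] at h1
  have : (∑ i ∈ Finset.range w, η ^ (i + 1) • f (t - (i + 1)))
      = (∑ i ∈ Finset.range w, η ^ i • f (t - i)) + η ^ w • f (t - w) - f t := by
    rw [h1]; abel
  rw [this]; abel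

/-- Drift of the window-averaged linear-system solution (Lemma B.3): with
`Ĥ_{t,w} = (1/W)Σ_{i<w} η^i H_{t−i}`, `b̂_{t,w} = (1/W)Σ_{i<w} η^i b_{t−i}` and
`v*_{t,w}(z)` the solution of `Ĥ_{t,w}(z) v = b̂_{t,w}(z)`,
`‖v*_{t−1,w}(z) − v*_{t,w}(z)‖ ≤ (1 + η^w) L_{f,0} (L_{g,1} + μ_g) / (μ_g² W)`. -/
theorem window_vstar_drift {E E' : Type*}
    [NormedAddCommGroup E] [InnerProductSpace ℝ E] [FiniteDimensional ℝ E]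
    [NormedAddCommGroup E'] [NormedSpace ℝ E']
    (μ_g L_g1 L_f0 : ℝ) (hμ : 0 < μ_g) (hμL : μ_g ≤ L_g1) (hLf0 : 0 < L_f0)
    (T w : ℕ) (hw : 1 ≤ w)
    (η : ℝ) (hη : 0 < η) (hη1 : η ≤ 1)
    (W : ℝ) (hW : W = ∑ i ∈ Finset.range w, η ^ i)
    (H : ℕ → E' → (E →L[ℝ] E)) (b : ℕ → E' → E)
    (hHsa : ∀ s ∈ Finset.Icc 1 T, ∀ (z : E') (v u : E), ⟪H s z v, u⟫ = ⟪v, H s z u⟫)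
    (hHcoer : ∀ s ∈ Finset.Icc 1 T, ∀ (z : E') (v : E), μ_g * ‖v‖ ^ 2 ≤ ⟪H s z v, v⟫)
    (hHbd : ∀ s ∈ Finset.Icc 1 T, ∀ z : E', ‖H s z‖ ≤ L_g1)
    (hbbd : ∀ s ∈ Finset.Icc 1 T, ∀ z : E', ‖b s z‖ ≤ L_f0)
    (Hhat : ℕ → E' → (E →L[ℝ] E)) (bhat : ℕ → E' → E)
    (hHhat : ∀ (t : ℕ) (z : E'),
      Hhat t z = (1 / W) • ∑ i ∈ Finset.range w, η ^ i • H (t - i) z)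
    (hbhat : ∀ (t : ℕ) (z : E'),
      bhat t z = (1 / W) • ∑ i ∈ Finset.range w, η ^ i • b (t - i) z)
    (vhat : ℕ → E' → E)
    (hvhat : ∀ t ∈ Finset.Icc w T, ∀ z : E', Hhat t z (vhat t z) = bhat t z) :
    ∀ t ∈ Finset.Icc (w + 1) T, ∀ z : E',
      ‖vhat (t - 1) z - vhat t z‖ ≤
        (1 + η ^ w) * L_f0 * (L_g1 + μ_g) / (μ_g ^ 2 * W) := by
  intro t ht z
  rw [Finset.mem_Icc] at ht
  obtain ⟨ht1, ht2⟩ := ht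
  have hWpos : 0 < W := by
    rw [hW]
    exact Finset.sum_pos (fun i _ => pow_pos hη i) (Finset.nonempty_range_iff.mpr (by omega))
  have hηwpos : 0 < η ^ w := pow_pos hη w
  have hLg1 : 0 < L_g1 := lt_of_lt_of_le hμ hμL
  have hmem : ∀ t', w ≤ t' → t' ≤ T → ∀ i ∈ Finset.range w, t' - i ∈ Finset.Icc 1 T := by
    intro t' h1 h2 i hi
    rw [Finset.mem_range] at hi
    rw [Finset.mem_Icc]
    omega
  -- coercivity of Hhat
  have hcoer : ∀ t', w ≤ t' → t' ≤ T → ∀ u : E,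
      μ_g * ‖u‖ ^ 2 ≤ ⟪Hhat t' z u, u⟫ := by
    intro t' h1 h2 u
    rw [hHhat]
    simp only [ContinuousLinearMap.coe_smul', Pi.smul_apply, ContinuousLinearMap.coe_sum',
      Finset.sum_apply]
    rw [real_inner_smul_left, sum_inner]
    have hterm : ∀ i ∈ Finset.range w,
        η ^ i * (μ_g * ‖u‖ ^ 2) ≤ ⟪(η ^ i • H (t' - i) z) u, u⟫ := by
      intro i hi
      rw [ContinuousLinearMap.smul_apply, real_inner_smul_left]
      exact mul_le_mul_of_nonneg_left (hHcoer (t' - i) (hmem t' h1 h2 i hi) z u)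
        (le_of_lt (pow_pos hη i))
    have hsum := Finset.sum_le_sum hterm
    calc μ_g * ‖u‖ ^ 2 = (1 / W) * (W * (μ_g * ‖u‖ ^ 2)) := by field_simp
      _ = (1 / W) * ∑ i ∈ Finset.range w, η ^ i * (μ_g * ‖u‖ ^ 2) := by
          rw [← Finset.sum_mul, ← hW]
      _ ≤ (1 / W) * ∑ i ∈ Finset.range w, ⟪(η ^ i • H (t' - i) z) u, u⟫ := by
          exact mul_le_mul_of_nonneg_left hsum (by positivity)
  -- norm bound on bhat
  have hbhatbd : ∀ t', w ≤ t' → t' ≤ T → ‖bhat t' z‖ ≤ L_f0 := by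
    intro t' h1 h2
    rw [hbhat, norm_smul, Real.norm_eq_abs, abs_of_pos (by positivity : (0:ℝ) < 1 / W)]
    have hsumb : ‖∑ i ∈ Finset.range w, η ^ i • b (t' - i) z‖
        ≤ ∑ i ∈ Finset.range w, η ^ i * L_f0 := by
      refine (norm_sum_le _ _).trans (Finset.sum_le_sum fun i hi => ?_)
      rw [norm_smul, Real.norm_eq_abs, abs_of_pos (pow_pos hη i)]
      exact mul_le_mul_of_nonneg_left (hbbd _ (hmem t' h1 h2 i hi) z)
        (le_of_lt (pow_pos hη i))
    calc (1 / W) * ‖∑ i ∈ Finset.range w, η ^ i • b (t' - i) z‖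
        ≤ (1 / W) * (W * L_f0) := by
          refine mul_le_mul_of_nonneg_left (hsumb.trans ?_) (by positivity)
          rw [← Finset.sum_mul, ← hW]
      _ = L_f0 := by field_simp
  -- norm bound on vhat
  have hvbd : ∀ t', w ≤ t' → t' ≤ T → ‖vhat t' z‖ ≤ L_f0 / μ_g := by
    intro t' h1 h2
    set u := vhat t' z with hu
    have hc := hcoer t' h1 h2 u
    rw [hvhat t' (Finset.mem_Icc.mpr ⟨h1, h2⟩) z] at hc
    have hib : ⟪bhat t' z, u⟫ ≤ L_f0 * ‖u‖ :=
      (real_inner_le_norm _ _).trans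
        (mul_le_mul_of_nonneg_right (hbhatbd t' h1 h2) (norm_nonneg u))
    have hkey : μ_g * ‖u‖ ^ 2 ≤ L_f0 * ‖u‖ := hc.trans hib
    rcases eq_or_lt_of_le (norm_nonneg u) with h0 | h0
    · rw [← h0]; positivity
    · rw [le_div_iff₀ hμ]
      nlinarith
  -- abbreviations
  set v' := vhat (t - 1) z with hv'
  set v := vhat t z with hv
  have htw : w ≤ t - 1 := by omega
  have htw' : t - 1 ≤ T := by omega
  have hv'eq : Hhat (t - 1) z v' = bhat (t - 1) z :=
    hvhat (t - 1) (Finset.mem_Icc.mpr ⟨htw, htw'⟩) z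
  have hveq : Hhat t z v = bhat t z :=
    hvhat t (Finset.mem_Icc.mpr ⟨by omega, ht2⟩) z
  -- the key identity
  have hSH : (1 / W : ℝ) • ∑ i ∈ Finset.range w, η ^ i • (H (t - 1 - i) z v')
      = bhat (t - 1) z := by
    rw [← hv'eq, hHhat]
    simp only [ContinuousLinearMap.coe_smul', Pi.smul_apply, ContinuousLinearMap.coe_sum',
      Finset.sum_apply, ContinuousLinearMap.smul_apply]
  have hSb : (1 / W : ℝ) • ∑ i ∈ Finset.range w, η ^ i • b (t - 1 - i) z
      = bhat (t - 1) z := (hbhat (t - 1) z).symm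
  have hW0 : (1 / W : ℝ) ≠ 0 := by positivity
  have hSeq : (∑ i ∈ Finset.range w, η ^ i • (H (t - 1 - i) z v'))
      = ∑ i ∈ Finset.range w, η ^ i • b (t - 1 - i) z := by
    exact smul_right_injective E hW0 (hSH.trans hSb.symm)
  have key : Hhat t z v' - bhat t z
      = (1 / W) • ((H t z v' - b t z) - η ^ w • (H (t - w) z v' - b (t - w) z)) := by
    rw [hHhat, hbhat]
    simp only [ContinuousLinearMap.coe_smul', Pi.smul_apply, ContinuousLinearMap.coe_sum',
      Finset.sum_apply, ContinuousLinearMap.smul_apply]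
    rw [window_shift_aux η w t (fun s => H s z v'), window_shift_aux η w t (fun s => b s z)]
    rw [hSeq]
    module
  -- norm bound on the key expression
  have hv'bd : ‖v'‖ ≤ L_f0 / μ_g := hvbd (t - 1) htw htw'
  have hHv' : ∀ s, s ∈ Finset.Icc 1 T → ‖H s z v' - b s z‖ ≤ L_g1 * (L_f0 / μ_g) + L_f0 := by
    intro s hs
    refine (norm_sub_le _ _).trans (add_le_add ?_ (hbbd s hs z))
    calc ‖H s z v'‖ ≤ ‖H s z‖ * ‖v'‖ := (H s z).le_opNorm v'
      _ ≤ L_g1 * (L_f0 / μ_g) :=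
          mul_le_mul (hHbd s hs z) hv'bd (norm_nonneg _) (le_of_lt hLg1)
  have hmem1 : t ∈ Finset.Icc 1 T := Finset.mem_Icc.mpr ⟨by omega, ht2⟩
  have hmem2 : t - w ∈ Finset.Icc 1 T := Finset.mem_Icc.mpr ⟨by omega, by omega⟩
  have hnormkey : ‖Hhat t z v' - bhat t z‖
      ≤ (1 / W) * ((1 + η ^ w) * (L_g1 * (L_f0 / μ_g) + L_f0)) := by
    rw [key, norm_smul, Real.norm_eq_abs, abs_of_pos (by positivity : (0:ℝ) < 1 / W)]
    refine mul_le_mul_of_nonneg_left ?_ (by positivity)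
    calc ‖(H t z v' - b t z) - η ^ w • (H (t - w) z v' - b (t - w) z)‖
        ≤ ‖H t z v' - b t z‖ + ‖η ^ w • (H (t - w) z v' - b (t - w) z)‖ := norm_sub_le _ _
      _ ≤ (L_g1 * (L_f0 / μ_g) + L_f0) + η ^ w * (L_g1 * (L_f0 / μ_g) + L_f0) := by
          refine add_le_add (hHv' t hmem1) ?_
          rw [norm_smul, Real.norm_eq_abs, abs_of_pos hηwpos]
          exact mul_le_mul_of_nonneg_left (hHv' (t - w) hmem2) (le_of_lt hηwpos)
      _ = (1 + η ^ w) * (L_g1 * (L_f0 / μ_g) + L_f0) := by ring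
  -- coercivity at the difference
  have hdiff := hcoer t (by omega) ht2 (v' - v)
  have hAd : (Hhat t z) (v' - v) = Hhat t z v' - bhat t z := by
    rw [map_sub, hveq]
  have hib : ⟪(Hhat t z) (v' - v), v' - v⟫ ≤ ‖Hhat t z v' - bhat t z‖ * ‖v' - v‖ := by
    rw [hAd]
    exact real_inner_le_norm _ _
  have hchain : μ_g * ‖v' - v‖ ^ 2
      ≤ ((1 / W) * ((1 + η ^ w) * (L_g1 * (L_f0 / μ_g) + L_f0))) * ‖v' - v‖ :=
    (hdiff.trans hib).trans (mul_le_mul_of_nonneg_right hnormkey (norm_nonneg _))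
  rcases eq_or_lt_of_le (norm_nonneg (v' - v)) with h0 | h0
  · rw [← h0]; positivity
  · have hd : μ_g * ‖v' - v‖ ≤ (1 / W) * ((1 + η ^ w) * (L_g1 * (L_f0 / μ_g) + L_f0)) := by
      nlinarith
    rw [le_div_iff₀ (by positivity)]
    have hexp : (1 / W) * ((1 + η ^ w) * (L_g1 * (L_f0 / μ_g) + L_f0)) * μ_g
        = (1 + η ^ w) * L_f0 * (L_g1 + μ_g) / W := by
      field_simp
    have hstep : μ_g * ‖v' - v‖ * μ_g ≤ (1 + η ^ w) * L_f0 * (L_g1 + μ_g) / W := by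
      rw [← hexp]
      exact mul_le_mul_of_nonneg_right hd (le_of_lt hμ)
    have hWne : W ≠ 0 := ne_of_gt hWpos
    calc ‖v' - v‖ * (μ_g ^ 2 * W) = (μ_g * ‖v' - v‖ * μ_g) * W := by ring
      _ ≤ ((1 + η ^ w) * L_f0 * (L_g1 + μ_g) / W) * W :=
          mul_le_mul_of_nonneg_right hstep (le_of_lt hWpos)
      _ = (1 + η ^ w) * L_f0 * (L_g1 + μ_g) := by field_simp
end
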